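/- arXiv:1811.04420 — 8 statements merged into one kernel-verified Lean document; each statement's English description precedes it below -/
import Mathlib

section
/- It holds that ∫ μ(y)² / η(y) dy ≤ 2, where the integrand is taken to be 0 on the set where η(y) = 0 (on which μ(y) = 0 for almost every y as well). -/
open MeasureTheory ENNReal Set

/-!
With the weight `w_y(t) = p(y, √t) e^{-t}` on `t > 0`, `η(y) = ∫ w_y` and `μ(y) = ∫ t w_y`, so
Cauchy–Schwarz gives `μ(y)² ≤ η(y) ν(y)` with `ν(y) = ∫ t² w_y`. Integrating `ν` over `y` first
(Tonelli) uses up the density `p(·, √t)` and leaves `∫₀^∞ t² e^{-t} dt = Γ(3) = 2`.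
-/

theorem ENNReal.sq_lintegral_mul_le {α : Type*} [MeasurableSpace α] {ρ : Measure α}
    {h w : α → ℝ≥0∞} (hh : AEMeasurable h ρ) (hw : AEMeasurable w ρ) :
    (∫⁻ a, h a * w a ∂ρ) ^ 2 ≤ (∫⁻ a, w a ∂ρ) * ∫⁻ a, h a ^ 2 * w a ∂ρ := by
  have hsqrt : ∀ x : ℝ≥0∞, (x ^ (2 : ℝ)⁻¹) ^ 2 = x := fun x => by
    rw [← ENNReal.rpow_natCast, ← ENNReal.rpow_mul]; norm_num
  have hmul : ∀ a, w a ^ (2 : ℝ)⁻¹ * (h a ^ 2 * w a) ^ (2 : ℝ)⁻¹ = h a * w a := fun a => by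
    rw [ENNReal.mul_rpow_of_nonneg _ _ (by norm_num), ← ENNReal.rpow_natCast (h a) 2,
      ← ENNReal.rpow_mul, show ((2 : ℕ) : ℝ) * 2⁻¹ = 1 by norm_num, ENNReal.rpow_one,
      mul_left_comm, ← sq, hsqrt]
  have hCS := ENNReal.lintegral_mul_norm_pow_le hw ((hh.pow_const 2).mul hw)
    (p := 2⁻¹) (q := 2⁻¹) (by norm_num) (by norm_num) (by norm_num)
  simp only [Pi.mul_apply, hmul] at hCS
  calc (∫⁻ a, h a * w a ∂ρ) ^ 2
      ≤ ((∫⁻ a, w a ∂ρ) ^ (2 : ℝ)⁻¹ * (∫⁻ a, h a ^ 2 * w a ∂ρ) ^ (2 : ℝ)⁻¹) ^ 2 := by gcongr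
    _ = _ := by rw [mul_pow, hsqrt, hsqrt]

theorem lintegral_ofReal_eq_one_of_integral_eq_one {α : Type*} [MeasurableSpace α]
    {ρ : Measure α} {f : α → ℝ} (hf : 0 ≤ᵐ[ρ] f) (h1 : ∫ a, f a ∂ρ = 1) :
    ∫⁻ a, ENNReal.ofReal (f a) ∂ρ = 1 := by
  rw [← ofReal_integral_eq_lintegral_ofReal (Integrable.of_integral_ne_zero (by simp [h1])) hf,
    h1, ENNReal.ofReal_one]

theorem lintegral_lintegral_mul_eq_of_lintegral_eq_one {α β : Type*}
    [MeasurableSpace α] [MeasurableSpace β]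
    {ν : Measure β} {ρ : Measure α} [SFinite ν] [SFinite ρ] {q : β → α → ℝ≥0∞}
    (hq : Measurable (Function.uncurry q)) (hq1 : ∀ᵐ t ∂ρ, ∫⁻ y, q y t ∂ν = 1)
    {g : α → ℝ≥0∞} (hg : Measurable g) :
    ∫⁻ y, ∫⁻ t, g t * q y t ∂ρ ∂ν = ∫⁻ t, g t ∂ρ := by
  rw [lintegral_lintegral_swap ((hg.comp measurable_snd).mul hq).aemeasurable]
  refine lintegral_congr_ae (hq1.mono fun t ht => ?_)
  dsimp only
  rw [lintegral_const_mul _ hq.of_uncurry_right, ht, mul_one]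

theorem lintegral_pow_mul_exp_neg_Ioi (n : ℕ) :
    ∫⁻ t in Ioi (0 : ℝ), ENNReal.ofReal (t ^ n * Real.exp (-t)) = n.factorial := by
  have hGamma := Real.Gamma_eq_integral (s := n + 1) (by positivity)
  have hconv := Real.GammaIntegral_convergent (s := n + 1) (by positivity)
  rw [Real.Gamma_nat_eq_factorial, add_sub_cancel_right] at hGamma
  rw [add_sub_cancel_right] at hconv
  rw [← ENNReal.ofReal_natCast, hGamma, ofReal_integral_eq_lintegral_ofReal hconv
    (ae_restrict_of_forall_mem measurableSet_Ioi fun t ht =>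
      mul_nonneg (Real.exp_pos _).le (Real.rpow_nonneg (le_of_lt ht) _))]
  refine setLIntegral_congr_fun measurableSet_Ioi fun t _ => ?_
  rw [Real.rpow_natCast, mul_comm]

/-- For a conditional density `p` (so `∫ p(y, s) dy = 1` for every `s ≥ 0`),
with `η(y) = ∫₀^∞ p(y, √t) e^{−t} dt` and `μ(y) = ∫₀^∞ t p(y, √t) e^{−t} dt`,
one has `∫ μ(y)²/η(y) dy ≤ 2` (integrand taken to be `0` where `η(y) = 0`). -/
theorem stmt3 (p : ℝ → ℝ → ℝ) (hp : Measurable (Function.uncurry p))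
    (hp0 : ∀ y s, 0 ≤ p y s)
    (hp1 : ∀ s, 0 ≤ s → ∫ y, p y s = 1)
    (η μ : ℝ → ℝ≥0∞)
    (hη : ∀ y, η y = ∫⁻ t in Ioi (0:ℝ), ENNReal.ofReal (p y (Real.sqrt t) * Real.exp (-t)))
    (hμ : ∀ y, μ y = ∫⁻ t in Ioi (0:ℝ), ENNReal.ofReal (t * p y (Real.sqrt t) * Real.exp (-t))) :
    (∫⁻ y, if η y = 0 then 0 else (μ y) ^ 2 / η y) ≤ 2 := by
  let w : ℝ → ℝ → ℝ≥0∞ := fun y t => ENNReal.ofReal (p y (Real.sqrt t) * Real.exp (-t))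
  have hp_sqrt : Measurable fun z : ℝ × ℝ => p z.1 (Real.sqrt z.2) :=
    hp.comp (measurable_fst.prodMk (Real.continuous_sqrt.measurable.comp measurable_snd))
  have hw : Measurable (Function.uncurry w) :=
    (hp_sqrt.mul (Real.continuous_exp.measurable.comp measurable_snd.neg)).ennreal_ofReal
  have hμw : ∀ y, μ y = ∫⁻ t in Ioi 0, ENNReal.ofReal t * w y t := fun y => by
    rw [hμ]
    refine lintegral_congr fun t => ?_
    rw [mul_assoc, ENNReal.ofReal_mul' (mul_nonneg (hp0 _ _) (Real.exp_pos _).le)]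
  have hpt : ∀ y, (if η y = 0 then 0 else μ y ^ 2 / η y)
      ≤ ∫⁻ t in Ioi 0, ENNReal.ofReal t ^ 2 * w y t := fun y => by
    split_ifs
    · exact zero_le
    · refine ENNReal.div_le_of_le_mul' ?_
      rw [hη, hμw]
      exact ENNReal.sq_lintegral_mul_le measurable_ofReal.aemeasurable
        hw.of_uncurry_left.aemeasurable
  calc _ ≤ ∫⁻ y, ∫⁻ t in Ioi 0, ENNReal.ofReal t ^ 2 * w y t := lintegral_mono hpt
    _ = ∫⁻ y, ∫⁻ t in Ioi 0,
          ENNReal.ofReal (t ^ 2 * Real.exp (-t)) * ENNReal.ofReal (p y (Real.sqrt t)) := by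
      refine lintegral_congr fun y => setLIntegral_congr_fun measurableSet_Ioi fun t ht => ?_
      dsimp only [w]
      rw [ENNReal.ofReal_mul (hp0 _ _), ENNReal.ofReal_mul (sq_nonneg t),
        ENNReal.ofReal_pow (le_of_lt ht)]
      ring
    _ = ∫⁻ t in Ioi 0, ENNReal.ofReal (t ^ 2 * Real.exp (-t)) := by
      refine lintegral_lintegral_mul_eq_of_lintegral_eq_one ?_ ?_ (by fun_prop)
      · exact hp_sqrt.ennreal_ofReal
      · exact ae_of_all _ fun t => lintegral_ofReal_eq_one_of_integral_eq_one
          (ae_of_all _ fun y => hp0 _ _) (hp1 _ (Real.sqrt_nonneg t))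
    _ = 2 := by rw [lintegral_pow_mul_exp_neg_Ioi]; norm_num
end

section
/- It holds that ∫ (μ(y) − η(y))² / η(y) dy ≤ 1 (with the integrand taken to be 0 where η(y) = 0), and hence the weak reconstruction threshold α_weak = [∫ (μ(y) − η(y))² / η(y) dy]⁻¹ satisfies α_weak ≥ 1. Moreover, equality α_weak = 1 holds in the noiseless phase-retrieval model, for which η(y) = e^{−y} and μ(y) = y e^{−y} for y ≥ 0. -/
/-!
For fixed `y` let `ν_y` be the measure `p(y, √t) e^{-t} dt` on `(0, ∞)`, so that `η(y) = ν_y(ℝ)`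
and `μ(y) = ∫ t dν_y`. Then `|μ(y) - η(y)| ≤ ∫ |t - 1| dν_y`, and Cauchy–Schwarz against the
constant `1` gives `(μ(y) - η(y))² / η(y) ≤ ∫ (t - 1)² dν_y`. Integrating in `y` with Tonelli and
`∫ p(y, s) dy = 1` bounds the left-hand side by `∫₀^∞ (t - 1)² e^{-t} dt = 1`, the variance of an
`Exp(1)` variable. In the phase-retrieval model the integrand is exactly `(y - 1)² e^{-y}`.
-/

open MeasureTheory ENNReal Set Filter Topology

section ChiSquare

variable {α : Type*} [MeasurableSpace α] (ν : Measure α)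

theorem lintegral_sq_le_lintegral_sq_mul_measure_univ {a : α → ℝ≥0∞} (ha : AEMeasurable a ν) :
    (∫⁻ x, a x ∂ν) ^ 2 ≤ (∫⁻ x, a x ^ 2 ∂ν) * ν univ := by
  have holder := ENNReal.lintegral_mul_le_Lp_mul_Lq ν Real.HolderConjugate.two_two ha
    (aemeasurable_const (b := 1))
  simp only [Pi.mul_apply, mul_one, ENNReal.rpow_two, one_pow, lintegral_one] at holder
  calc (∫⁻ x, a x ∂ν) ^ 2
      ≤ ((∫⁻ x, a x ^ 2 ∂ν) ^ (1 / 2 : ℝ) * ν univ ^ (1 / 2 : ℝ)) ^ 2 := by gcongr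
    _ = (∫⁻ x, a x ^ 2 ∂ν) * ν univ := by
      rw [mul_pow, ← ENNReal.rpow_two, ← ENNReal.rpow_two, ← ENNReal.rpow_mul,
        ← ENNReal.rpow_mul]
      norm_num

theorem lintegral_ofReal_sub_le_lintegral_ofReal_abs_sub {f g : α → ℝ}
    (hf : AEMeasurable f ν) (hg : AEMeasurable g ν) :
    (∫⁻ x, ENNReal.ofReal (f x) ∂ν - ∫⁻ x, ENNReal.ofReal (g x) ∂ν) ⊔
        (∫⁻ x, ENNReal.ofReal (g x) ∂ν - ∫⁻ x, ENNReal.ofReal (f x) ∂ν)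
      ≤ ∫⁻ x, ENNReal.ofReal |f x - g x| ∂ν := by
  have ofReal_le (a b : ℝ) : ENNReal.ofReal a ≤ ENNReal.ofReal |a - b| + ENNReal.ofReal b :=
    (ENNReal.ofReal_le_ofReal (by linarith [le_abs_self (a - b)])).trans ENNReal.ofReal_add_le
  refine sup_le (tsub_le_iff_right.2 ?_) (tsub_le_iff_right.2 ?_)
  · calc ∫⁻ x, ENNReal.ofReal (f x) ∂ν
        ≤ ∫⁻ x, ENNReal.ofReal |f x - g x| + ENNReal.ofReal (g x) ∂ν :=
          lintegral_mono fun x => ofReal_le _ _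
      _ = _ := lintegral_add_right' _ hg.ennreal_ofReal
  · calc ∫⁻ x, ENNReal.ofReal (g x) ∂ν
        ≤ ∫⁻ x, ENNReal.ofReal |f x - g x| + ENNReal.ofReal (f x) ∂ν :=
          lintegral_mono fun x => abs_sub_comm (f x) (g x) ▸ ofReal_le _ _
      _ = _ := lintegral_add_right' _ hf.ennreal_ofReal

/-- `|m - w|² / w`, with `0` where `w = 0`; on `ℝ≥0∞` subtraction truncates, so
`(m - w) ⊔ (w - m)` is the absolute difference. -/
noncomputable def chiSqIntegrand (m w : ℝ≥0∞) : ℝ≥0∞ :=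
  if w = 0 then 0 else ((m - w) ⊔ (w - m)) ^ 2 / w

theorem chiSqIntegrand_lintegral_ofReal_le {f : α → ℝ} (hf : AEMeasurable f ν) :
    chiSqIntegrand (∫⁻ x, ENNReal.ofReal (f x) ∂ν) (ν univ)
      ≤ ∫⁻ x, ENNReal.ofReal ((f x - 1) ^ 2) ∂ν := by
  unfold chiSqIntegrand
  split_ifs
  · exact zero_le
  refine ENNReal.div_le_of_le_mul ?_
  have hdist := lintegral_ofReal_sub_le_lintegral_ofReal_abs_sub ν hf (aemeasurable_const (b := 1))
  simp only [ENNReal.ofReal_one, lintegral_one] at hdist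
  calc _ ≤ (∫⁻ x, ENNReal.ofReal |f x - 1| ∂ν) ^ 2 := by gcongr
    _ ≤ (∫⁻ x, ENNReal.ofReal |f x - 1| ^ 2 ∂ν) * ν univ :=
      lintegral_sq_le_lintegral_sq_mul_measure_univ ν
        (hf.sub aemeasurable_const).abs.ennreal_ofReal
    _ = _ := by
      simp only [← ENNReal.ofReal_pow (abs_nonneg _), sq_abs]

end ChiSquare

theorem hasDerivAt_neg_sq_add_one_mul_exp_neg (x : ℝ) :
    HasDerivAt (fun t => -(t ^ 2 + 1) * Real.exp (-t)) ((x - 1) ^ 2 * Real.exp (-x)) x :=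
  ((((hasDerivAt_id x).fun_pow 2).add_const 1).fun_neg.fun_mul (hasDerivAt_neg x).exp).congr_deriv
    (by simp only [id]; ring)

theorem tendsto_neg_sq_add_one_mul_exp_neg_atTop :
    Tendsto (fun t => -(t ^ 2 + 1) * Real.exp (-t)) atTop (𝓝 0) := by
  have h := ((Real.tendsto_pow_mul_exp_neg_atTop_nhds_zero 2).add
    Real.tendsto_exp_neg_atTop_nhds_zero).neg
  simp only [add_zero, neg_zero] at h
  convert h using 2
  ring

theorem integrableOn_sq_sub_one_mul_exp_neg :
    IntegrableOn (fun t => (t - 1) ^ 2 * Real.exp (-t)) (Ioi 0) :=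
  integrableOn_Ioi_deriv_of_nonneg' (fun x _ => hasDerivAt_neg_sq_add_one_mul_exp_neg x)
    (fun _ _ => by positivity) tendsto_neg_sq_add_one_mul_exp_neg_atTop

theorem integral_sq_sub_one_mul_exp_neg :
    ∫ t in Ioi 0, (t - 1) ^ 2 * Real.exp (-t) = 1 := by
  rw [integral_Ioi_of_hasDerivAt_of_nonneg' (fun x _ => hasDerivAt_neg_sq_add_one_mul_exp_neg x)
    (fun _ _ => by positivity) tendsto_neg_sq_add_one_mul_exp_neg_atTop]
  simp

theorem lintegral_sq_sub_one_mul_exp_neg :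
    ∫⁻ t in Ioi 0, ENNReal.ofReal ((t - 1) ^ 2 * Real.exp (-t)) = 1 := by
  rw [← ofReal_integral_eq_lintegral_ofReal integrableOn_sq_sub_one_mul_exp_neg
    (.of_forall fun _ => by positivity), integral_sq_sub_one_mul_exp_neg, ENNReal.ofReal_one]

theorem lintegral_ofReal_eq_one {β : Type*} [MeasurableSpace β] {ρ : Measure β} {f : β → ℝ}
    (hf0 : ∀ y, 0 ≤ f y) (hf1 : ∫ y, f y ∂ρ = 1) : ∫⁻ y, ENNReal.ofReal (f y) ∂ρ = 1 := by
  rw [← ofReal_integral_eq_lintegral_ofReal (.of_integral_ne_zero (hf1 ▸ one_ne_zero))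
    (.of_forall hf0), hf1, ENNReal.ofReal_one]

theorem lintegral_lintegral_ofReal_density_mul {β : Type*} [MeasurableSpace β] (ρ : Measure β)
    [SFinite ρ] {p : ℝ → ℝ → ℝ} (hp : Measurable (Function.uncurry p)) (hp0 : ∀ y s, 0 ≤ p y s)
    (hp1 : ∀ s, 0 ≤ s → ∫ y, p y s = 1) {σ : β → ℝ} (hσ : Measurable σ) (hσ0 : ∀ t, 0 ≤ σ t)
    {w : β → ℝ≥0∞} (hw : Measurable w) :
    ∫⁻ y, ∫⁻ t, ENNReal.ofReal (p y (σ t)) * w t ∂ρ = ∫⁻ t, w t ∂ρ := by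
  have hmeas : Measurable (Function.uncurry fun y t => ENNReal.ofReal (p y (σ t)) * w t) :=
    (hp.comp (measurable_fst.prodMk (hσ.comp measurable_snd))).ennreal_ofReal.mul
      (hw.comp measurable_snd)
  rw [lintegral_lintegral_swap hmeas.aemeasurable]
  refine lintegral_congr fun t => ?_
  rw [lintegral_mul_const _ hp.of_uncurry_right.ennreal_ofReal,
    lintegral_ofReal_eq_one (fun y => hp0 y _) (hp1 _ (hσ0 t)), one_mul]

/-- For a conditional density `p` (so `∫ p(y, s) dy = 1` for every `s ≥ 0`),
with `η(y) = ∫₀^∞ p(y, √t) e^{−t} dt` and `μ(y) = ∫₀^∞ t p(y, √t) e^{−t} dt`,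
one has `∫ (μ(y) − η(y))²/η(y) dy ≤ 1` (integrand taken to be `0` where
`η(y) = 0`), hence `α_weak = [∫ (μ(y) − η(y))²/η(y) dy]⁻¹ ≥ 1`. Equality
`α_weak = 1` holds in the noiseless phase-retrieval model, where
`η(y) = e^{−y}` and `μ(y) = y e^{−y}` for `y ≥ 0`. -/
theorem stmt4 (p : ℝ → ℝ → ℝ) (hp : Measurable (Function.uncurry p))
    (hp0 : ∀ y s, 0 ≤ p y s)
    (hp1 : ∀ s, 0 ≤ s → ∫ y, p y s = 1)
    (η μ : ℝ → ℝ≥0∞)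
    (hη : ∀ y, η y = ∫⁻ t in Ioi (0:ℝ), ENNReal.ofReal (p y (Real.sqrt t) * Real.exp (-t)))
    (hμ : ∀ y, μ y = ∫⁻ t in Ioi (0:ℝ), ENNReal.ofReal (t * p y (Real.sqrt t) * Real.exp (-t))) :
    (∫⁻ y, if η y = 0 then 0 else ((μ y - η y) ⊔ (η y - μ y)) ^ 2 / η y) ≤ 1 ∧
    1 ≤ (∫⁻ y, if η y = 0 then 0 else ((μ y - η y) ⊔ (η y - μ y)) ^ 2 / η y)⁻¹ ∧
    (∫ y in Ici (0:ℝ),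
        (y * Real.exp (-y) - Real.exp (-y)) ^ 2 / Real.exp (-y)) = 1 := by
  set density : ℝ → ℝ → ℝ≥0∞ := fun y t => ENNReal.ofReal (p y (Real.sqrt t) * Real.exp (-t))
  have hdensity (y : ℝ) : Measurable (density y) := by
    have := hp.of_uncurry_left (x := y)
    fun_prop
  set ν : ℝ → Measure ℝ := fun y => (volume.restrict (Ioi 0)).withDensity (density y)
  have hη_eq (y : ℝ) : η y = ν y univ := by
    rw [hη, withDensity_apply _ MeasurableSet.univ, Measure.restrict_univ]
  have hμ_eq (y : ℝ) : μ y = ∫⁻ t, ENNReal.ofReal t ∂ν y := by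
    rw [hμ, lintegral_withDensity_eq_lintegral_mul _ (hdensity y) ENNReal.measurable_ofReal]
    refine lintegral_congr fun t => ?_
    rw [Pi.mul_apply, mul_assoc, ENNReal.ofReal_mul' (mul_nonneg (hp0 _ _) (Real.exp_pos _).le),
      mul_comm]
  have hbound : ∫⁻ y, chiSqIntegrand (μ y) (η y) ≤ 1 := calc
    _ ≤ ∫⁻ y, ∫⁻ t, ENNReal.ofReal ((t - 1) ^ 2) ∂ν y := lintegral_mono fun y => by
      rw [hη_eq, hμ_eq]
      exact chiSqIntegrand_lintegral_ofReal_le (ν y) aemeasurable_id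
    _ = ∫⁻ y, ∫⁻ t in Ioi 0,
          ENNReal.ofReal (p y (Real.sqrt t)) * ENNReal.ofReal ((t - 1) ^ 2 * Real.exp (-t)) := by
      refine lintegral_congr fun y => ?_
      rw [lintegral_withDensity_eq_lintegral_mul _ (hdensity y) (by fun_prop)]
      refine lintegral_congr fun t => ?_
      rw [Pi.mul_apply, ← ENNReal.ofReal_mul' (by positivity), ← ENNReal.ofReal_mul' (by positivity)]
      congr 1
      ring
    _ = 1 := by
      rw [lintegral_lintegral_ofReal_density_mul _ hp hp0 hp1 (by fun_prop)
        Real.sqrt_nonneg (by fun_prop), lintegral_sq_sub_one_mul_exp_neg]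
  refine ⟨hbound, ENNReal.one_le_inv.2 hbound, ?_⟩
  rw [integral_Ici_eq_integral_Ioi, ← integral_sq_sub_one_mul_exp_neg]
  refine integral_congr_ae (.of_forall fun y => ?_)
  field_simp
end

section
/- For every real κ > 0, ∑_{y=0}^∞ κ^y (y − κ)² / (κ + 1)^{y+3} = κ/(κ + 1); equivalently, the weak reconstruction threshold of the Poisson model, α_weak = [∑_{y=0}^∞ (μ(y) − η(y))²/η(y)]⁻¹ with η(y) = κ^y/(κ+1)^{y+1} and μ(y) = κ^y (y+1)/(κ+1)^{y+2}, equals 1 + 1/κ. -/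
/-!
With `q = κ/(κ+1)` the weights `η(y) = κ^y/(κ+1)^(y+1) = (1 - q) q^y` form the geometric
distribution of mean `κ` and variance `κ(κ+1)`, so the first series is this variance divided by
`(κ+1)^2`. The second series is the same one, because `μ(y) - η(y) = η(y) (y - κ)/(κ+1)`.
-/

theorem hasSum_sq_sub_mean_mul_geometric {𝕜 : Type*} [NormedField 𝕜] [CompleteSpace 𝕜]
    {r : 𝕜} (hr : ‖r‖ < 1) :
    HasSum (fun n : ℕ ↦ ((n : 𝕜) - r / (1 - r)) ^ 2 * r ^ n) (r / (1 - r) ^ 3) := by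
  have h1r : 1 - r ≠ 0 := sub_ne_zero.mpr (by rintro rfl; simp at hr)
  have h0 : HasSum (fun n : ℕ ↦ r ^ n) (1 - r)⁻¹ := hasSum_geometric_of_norm_lt_one hr
  have h1 : HasSum (fun n : ℕ ↦ ((n : 𝕜) + 1) * r ^ n) (1 / (1 - r) ^ 2) := by
    simpa using hasSum_choose_mul_geometric_of_norm_lt_one 1 hr
  have h2 : HasSum (fun n : ℕ ↦ ((n + 2).choose 2 : 𝕜) * r ^ n) (1 / (1 - r) ^ 3) :=
    hasSum_choose_mul_geometric_of_norm_lt_one 2 hr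
  -- `(n - m)² = 2 C(n+2, 2) - (3 + 2m) (n + 1) + (1 + m)²` for every `m`
  convert! ((h2.mul_left 2).sub (h1.mul_left (3 + 2 * (r / (1 - r))))).add
    (h0.mul_left ((1 + r / (1 - r)) ^ 2)) using 1
  · funext n
    have hchoose : (n + 2).choose 2 * 2 = (n + 2) * (n + 1) := by
      simpa using (Nat.add_one_mul_choose_eq (n + 1) 1).symm
    replace hchoose := congrArg (Nat.cast (R := 𝕜)) hchoose
    push_cast at hchoose
    linear_combination (-r ^ n) * hchoose
  · field_simp
    ring

theorem hasSum_pow_mul_sq_sub_div_add_one_pow {κ : ℝ} (hκ : 0 ≤ κ) :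
    HasSum (fun y : ℕ ↦ κ ^ y * ((y : ℝ) - κ) ^ 2 / (κ + 1) ^ (y + 3)) (κ / (κ + 1)) := by
  have hκ1 : κ + 1 ≠ 0 := by positivity
  have hq : ‖κ / (κ + 1)‖ < 1 := by
    rw [Real.norm_of_nonneg (by positivity), div_lt_one (by positivity)]
    linarith
  have hmean : κ / (κ + 1) / (1 - κ / (κ + 1)) = κ := by
    field_simp
    ring
  have H := (hasSum_sq_sub_mean_mul_geometric hq).div_const ((κ + 1) ^ 3)
  rw [hmean] at H
  convert! H using 1
  · funext y
    rw [div_pow]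
    field_simp
    ring
  · field_simp
    ring

theorem poisson_chiSq_summand_eq {κ : ℝ} (hκ : κ ≠ 0) (hκ1 : κ + 1 ≠ 0) (y : ℕ) :
    (κ ^ y * ((y : ℝ) + 1) / (κ + 1) ^ (y + 2) - κ ^ y / (κ + 1) ^ (y + 1)) ^ 2
      / (κ ^ y / (κ + 1) ^ (y + 1)) = κ ^ y * ((y : ℝ) - κ) ^ 2 / (κ + 1) ^ (y + 3) := by
  field_simp
  ring

/-- For the Poisson model with parameter `κ > 0`:
`∑_{y=0}^∞ κ^y (y − κ)²/(κ+1)^{y+3} = κ/(κ+1)`; equivalently, the weak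
reconstruction threshold `α_weak = [∑_y (μ(y) − η(y))²/η(y)]⁻¹`, with
`η(y) = κ^y/(κ+1)^{y+1}` and `μ(y) = κ^y (y+1)/(κ+1)^{y+2}`, equals `1 + 1/κ`. -/
theorem stmt8 (κ : ℝ) (hκ : 0 < κ) :
    (∑' y : ℕ, κ ^ y * ((y : ℝ) - κ) ^ 2 / (κ + 1) ^ (y + 3) = κ / (κ + 1)) ∧
    ((∑' y : ℕ,
        (κ ^ y * ((y : ℝ) + 1) / (κ + 1) ^ (y + 2) - κ ^ y / (κ + 1) ^ (y + 1)) ^ 2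
          / (κ ^ y / (κ + 1) ^ (y + 1)))⁻¹ = 1 + 1 / κ) := by
  have hsum := (hasSum_pow_mul_sq_sub_div_add_one_pow hκ.le).tsum_eq
  refine ⟨hsum, ?_⟩
  rw [tsum_congr (poisson_chiSq_summand_eq hκ.ne' (by positivity)), hsum]
  field_simp
end

section
/- For every real β > 0 and κ > 0, (β/(κ+1)²) ∑_{y=0}^∞ (κ/(κ+1))^y (y − κ)² / (y + β(κ+1) + 1) = C_{β,κ} ∫₀^{κ/(κ+1)} x^{β(κ+1)} / (1 − x) dx − β(β + 1), where C_{β,κ} = (β+1)² β (1 + 1/κ)^{β(κ+1)+1}. The left-hand side equals f(β) = ∑_{y=0}^∞ (μ(y) − η(y))²/(η(y) + μ(y)/β) for the Poisson model with η(y) = κ^y/(κ+1)^{y+1} and μ(y) = κ^y (y+1)/(κ+1)^{y+2}. -/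
open MeasureTheory intervalIntegral

/-!
Write `q = κ/(κ+1)` and `a = β(κ+1)`. Expanding `1/(1-x)` as a geometric series and
integrating term by term gives `∫₀^q x^a/(1-x) dx = q^(a+1) ∑ qⁿ/(n+a+1)`, and
`(1 + 1/κ)^(a+1) = q^-(a+1)` cancels the prefactor. On the other side, `(n-κ)²/(n+a+1)` is
`(a+1+κ)²/(n+a+1)` plus a linear polynomial in `n`, whose geometric moments are elementary.
Since `a+1+κ = (β+1)(κ+1)`, the two sides agree. The second identity is a termwise computation.
-/

theorem summable_pow_div_natCast_add {q a : ℝ} (hq : ‖q‖ < 1) (ha : -1 < a) :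
    Summable fun n : ℕ => q ^ n / (n + a + 1) := by
  refine Summable.of_norm_bounded
    ((summable_geometric_of_lt_one (norm_nonneg q) hq).div_const (a + 1)) fun n => ?_
  have hn : a + 1 ≤ n + a + 1 := by linarith [n.cast_nonneg (α := ℝ)]
  rw [norm_div, norm_pow, Real.norm_of_nonneg (by linarith : (0 : ℝ) ≤ n + a + 1)]
  exact div_le_div_of_nonneg_left (by positivity) (by linarith) hn

theorem tsum_pow_mul_sq_sub_div {q a : ℝ} (hq : ‖q‖ < 1) (ha : -1 < a) (c : ℝ) :
    ∑' n : ℕ, q ^ n * ((n : ℝ) - c) ^ 2 / (n + a + 1)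
      = (a + 1 + c) ^ 2 * ∑' n : ℕ, q ^ n / (n + a + 1) + q / (1 - q) ^ 2
          - (a + 1 + 2 * c) / (1 - q) := by
  -- `(n - c)² = (n + a + 1) (n - (a + 1 + 2c)) + (a + 1 + c)²`
  have hsplit (n : ℕ) : q ^ n * ((n : ℝ) - c) ^ 2 / (n + a + 1)
      = (a + 1 + c) ^ 2 * (q ^ n / (n + a + 1)) + (n * q ^ n - (a + 1 + 2 * c) * q ^ n) := by
    have : (n : ℝ) + a + 1 ≠ 0 := by linarith [n.cast_nonneg (α := ℝ)]
    field_simp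
    ring
  have hgeom := summable_geometric_of_norm_lt_one hq
  have hcoe : Summable fun n : ℕ => (n : ℝ) * q ^ n := by
    simpa using summable_pow_mul_geometric_of_norm_lt_one 1 hq
  rw [tsum_congr hsplit, ((summable_pow_div_natCast_add hq ha).mul_left _).tsum_add
      (hcoe.sub (hgeom.mul_left _)), hcoe.tsum_sub (hgeom.mul_left _), tsum_mul_left,
    tsum_mul_left, tsum_coe_mul_geometric_of_norm_lt_one hq, tsum_geometric_of_norm_lt_one hq]
  ring

theorem integral_rpow_div_one_sub_eq_tsum {q a : ℝ} (hq0 : 0 < q) (hq1 : q < 1) (ha : -1 < a) :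
    ∫ x in (0 : ℝ)..q, x ^ a / (1 - x) = q ^ (a + 1) * ∑' n : ℕ, q ^ n / (n + a + 1) := by
  have hterm (n : ℕ) :
      ∫ x in (0 : ℝ)..q, x ^ (a + n) = q ^ (a + 1) * (q ^ n / (n + a + 1)) := by
    have hn : -1 < a + n := by linarith [n.cast_nonneg (α := ℝ)]
    rw [integral_rpow (Or.inl hn), Real.zero_rpow (by linarith), add_right_comm,
      Real.rpow_add hq0, Real.rpow_natCast]
    ring
  have hgeom (x : ℝ) (hx : x ∈ Set.Ioc 0 q) : x ^ a / (1 - x) = ∑' n : ℕ, x ^ (a + n) := by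
    simp_rw [Real.rpow_add hx.1, Real.rpow_natCast]
    rw [tsum_mul_left, tsum_geometric_of_lt_one hx.1.le (hx.2.trans_lt hq1), div_eq_mul_inv]
  have hint (n : ℕ) : IntegrableOn (fun x : ℝ => x ^ (a + n)) (Set.Ioc 0 q) :=
    (intervalIntegrable_rpow' (by linarith [n.cast_nonneg (α := ℝ)])).1
  have hnorm (n : ℕ) :
      ∫ x in Set.Ioc 0 q, ‖x ^ (a + n)‖ = q ^ (a + 1) * (q ^ n / (n + a + 1)) := by
    rw [setIntegral_congr_fun measurableSet_Ioc
        fun x hx => Real.norm_of_nonneg (Real.rpow_nonneg hx.1.le _),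
      ← integral_of_le hq0.le, hterm]
  have hsum := (summable_pow_div_natCast_add (by rwa [Real.norm_of_nonneg hq0.le]) ha).mul_left
    (q ^ (a + 1))
  rw [integral_of_le hq0.le, setIntegral_congr_fun measurableSet_Ioc hgeom,
    ← integral_tsum_of_summable_integral_norm hint (by simpa only [hnorm] using hsum),
    ← tsum_mul_left]
  exact tsum_congr fun n => by rw [← integral_of_le hq0.le, hterm]

noncomputable def poissonEta (κ : ℝ) (y : ℕ) : ℝ := κ ^ y / (κ + 1) ^ (y + 1)

noncomputable def poissonMu (κ : ℝ) (y : ℕ) : ℝ :=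
  κ ^ y * ((y : ℝ) + 1) / (κ + 1) ^ (y + 2)

theorem poisson_chiSq_term_eq {β κ : ℝ} (hβ : 0 < β) (hκ : 0 < κ) (y : ℕ) :
    (poissonMu κ y - poissonEta κ y) ^ 2 / (poissonEta κ y + poissonMu κ y / β)
      = β / (κ + 1) ^ 2 *
          ((κ / (κ + 1)) ^ y * ((y : ℝ) - κ) ^ 2 / (y + β * (κ + 1) + 1)) := by
  have : (0 : ℝ) < y + β * (κ + 1) + 1 := by positivity
  simp only [poissonMu, poissonEta, pow_succ, div_pow]
  field_simp
  ring

/-- For the Poisson model with parameter `κ > 0` and every `β > 0`: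
`(β/(κ+1)²) ∑_y (κ/(κ+1))^y (y − κ)²/(y + β(κ+1) + 1)
  = C_{β,κ} ∫₀^{κ/(κ+1)} x^{β(κ+1)}/(1 − x) dx − β(β+1)`,
where `C_{β,κ} = (β+1)² β (1 + 1/κ)^{β(κ+1)+1}`; moreover the left-hand side
equals `f(β) = ∑_y (μ(y) − η(y))²/(η(y) + μ(y)/β)` with
`η(y) = κ^y/(κ+1)^{y+1}` and `μ(y) = κ^y (y+1)/(κ+1)^{y+2}`. -/
theorem stmt10 (β κ : ℝ) (hβ : 0 < β) (hκ : 0 < κ) :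
    ((β / (κ + 1) ^ 2) *
        ∑' y : ℕ, (κ / (κ + 1)) ^ y * ((y : ℝ) - κ) ^ 2 / ((y : ℝ) + β * (κ + 1) + 1)
      = (β + 1) ^ 2 * β * (1 + 1 / κ) ^ (β * (κ + 1) + 1) *
            (∫ x in (0:ℝ)..(κ / (κ + 1)), x ^ (β * (κ + 1)) / (1 - x))
          - β * (β + 1)) ∧
    (∑' y : ℕ,
        (κ ^ y * ((y : ℝ) + 1) / (κ + 1) ^ (y + 2) - κ ^ y / (κ + 1) ^ (y + 1)) ^ 2
          / (κ ^ y / (κ + 1) ^ (y + 1) + κ ^ y * ((y : ℝ) + 1) / (κ + 1) ^ (y + 2) / β)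
      = (β / (κ + 1) ^ 2) *
          ∑' y : ℕ, (κ / (κ + 1)) ^ y * ((y : ℝ) - κ) ^ 2 / ((y : ℝ) + β * (κ + 1) + 1)) := by
  have hq0 : 0 < κ / (κ + 1) := by positivity
  have hq1 : κ / (κ + 1) < 1 := (div_lt_one (by positivity)).2 (lt_add_one κ)
  have ha : -1 < β * (κ + 1) := by linarith [show 0 < β * (κ + 1) by positivity]
  have hT : (1 + 1 / κ) ^ (β * (κ + 1) + 1) *
        ∫ x in (0:ℝ)..(κ / (κ + 1)), x ^ (β * (κ + 1)) / (1 - x)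
      = ∑' n : ℕ, (κ / (κ + 1)) ^ n / (n + β * (κ + 1) + 1) := by
    rw [integral_rpow_div_one_sub_eq_tsum hq0 hq1 ha, ← mul_assoc,
      ← Real.mul_rpow (by positivity) hq0.le,
      show (1 + 1 / κ) * (κ / (κ + 1)) = 1 by field_simp, Real.one_rpow, one_mul]
  refine ⟨?_, ?_⟩
  · rw [tsum_pow_mul_sq_sub_div (by rwa [Real.norm_of_nonneg hq0.le]) ha,
      mul_assoc _ _ (∫ _ in _.._, _), hT]
    field_simp
    ring
  · rw [← tsum_mul_left]
    exact tsum_congr (poisson_chiSq_term_eq hβ hκ)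
end

section
/- For every σ > 0, ∫₀^∞ z · Φ(−z/σ) e^{−z} dz = 1/2 + (σ² − 1) exp(σ²/2) Φ(−σ) − σ/√(2π), where Φ is the standard normal cumulative distribution function. -/
/-!
Write `φ` for the standard normal density and `w = (z + σ²) / σ`. Integrating `z e^{-z}` by
parts against `Φ(-z/σ)` and completing the square, `e^{-z} φ(z/σ) = e^{σ²/2} φ(w)`, shows that
the integrand has the explicit primitive
`G(z) = -(1 + z) e^{-z} Φ(-z/σ) + e^{σ²/2} (σ φ(w) - (σ² - 1) Φ(-w))`.
`G` vanishes at infinity, so the integral is `-G(0)`, which is the right-hand side because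
`Φ(0) = 1/2` and `e^{σ²/2} φ(σ) = φ(0) = 1/√(2π)`.
-/

open MeasureTheory Set

/-- The standard normal cumulative distribution function. -/
noncomputable def stdNormalCDF (x : ℝ) : ℝ :=
  ∫ t in Iic x, (Real.sqrt (2 * Real.pi))⁻¹ * Real.exp (-t ^ 2 / 2)

open Filter Topology ProbabilityTheory Real
open scoped NNReal

section IntegralIic

variable {E : Type*} [NormedAddCommGroup E] [NormedSpace ℝ E] {f : ℝ → E}

theorem hasDerivAt_integral_Iic [CompleteSpace E] (hf : Integrable f) {x : ℝ}
    (hx : ContinuousAt f x) :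
    HasDerivAt (fun y => ∫ t in Iic y, f t) (f x) x := by
  have hsplit :
      (fun y => ∫ t in Iic y, f t) = fun y => (∫ t in Iic 0, f t) + ∫ t in 0..y, f t := by
    funext y
    rw [← intervalIntegral.integral_Iic_sub_Iic hf.integrableOn hf.integrableOn, add_sub_cancel]
  rw [hsplit]
  exact (intervalIntegral.integral_hasDerivAt_right hf.intervalIntegrable
    (hf.aestronglyMeasurable.stronglyMeasurableAtFilter) hx).const_add _

theorem integral_Iic_zero_of_even (hf : Integrable f) (heven : f.Even) :
    ∫ t in Iic 0, f t = (2 : ℝ)⁻¹ • ∫ t, f t := by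
  have hsymm : ∫ t in Ioi 0, f t = ∫ t in Iic 0, f t := by
    have h := integral_comp_neg_Ioi 0 f
    rwa [neg_zero, funext heven] at h
  rw [← intervalIntegral.integral_Iic_add_Ioi hf.integrableOn hf.integrableOn, hsymm,
    ← two_smul ℝ, smul_smul, inv_mul_cancel₀ two_ne_zero, one_smul]

end IntegralIic

theorem even_gaussianPDFReal_zero (v : ℝ≥0) : (gaussianPDFReal 0 v).Even := fun x => by
  simp [gaussianPDFReal]

theorem hasDerivAt_gaussianPDFReal (μ : ℝ) (v : ℝ≥0) (x : ℝ) :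
    HasDerivAt (gaussianPDFReal μ v) (-(x - μ) / v * gaussianPDFReal μ v x) x := by
  have h : HasDerivAt (fun y => -(y - μ) ^ 2 / (2 * v)) (-(x - μ) / v) x := by
    refine (((hasDerivAt_id x).sub_const μ).pow 2).neg.div_const (2 * (v : ℝ)) |>.congr_deriv ?_
    simp only [id]
    ring
  rw [gaussianPDFReal_def]
  exact (h.exp.const_mul _).congr_deriv (by ring)

theorem tendsto_gaussianPDFReal_atTop (μ : ℝ) (v : ℝ≥0) :
    Tendsto (gaussianPDFReal μ v) atTop (𝓝 0) := by
  rcases eq_or_ne v 0 with rfl | hv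
  · rw [gaussianPDFReal_zero_var]
    exact tendsto_const_nhds
  have hv' : (0 : ℝ) < 2 * v := by positivity
  have hsq : Tendsto (fun y => (y - μ) ^ 2) atTop atTop :=
    (tendsto_pow_atTop two_ne_zero).comp (tendsto_atTop_add_const_right _ (-μ) tendsto_id)
  have h : Tendsto (fun y => -(y - μ) ^ 2 / (2 * v)) atTop atBot :=
    (tendsto_neg_atTop_atBot.comp hsq).atBot_div_const hv'
  rw [gaussianPDFReal_def]
  simpa using (tendsto_exp_atBot.comp h).const_mul (√(2 * π * v))⁻¹

local notation "φ" => gaussianPDFReal 0 1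

theorem stdNormalCDF_eq_integral (x : ℝ) : stdNormalCDF x = ∫ t in Iic x, φ t := by
  simp [stdNormalCDF, gaussianPDFReal]

theorem stdNormalCDF_eq_cdf : stdNormalCDF = cdf (gaussianReal 0 1) := by
  funext x
  rw [cdf_eq_real, measureReal_def, gaussianReal_apply_eq_integral 0 one_ne_zero,
    ENNReal.toReal_ofReal
      (setIntegral_nonneg measurableSet_Iic fun t _ => gaussianPDFReal_nonneg 0 1 t),
    stdNormalCDF_eq_integral]

theorem hasDerivAt_stdNormalCDF (x : ℝ) : HasDerivAt stdNormalCDF (φ x) x := by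
  simp_rw [funext stdNormalCDF_eq_integral]
  exact hasDerivAt_integral_Iic (integrable_gaussianPDFReal 0 1)
    (hasDerivAt_gaussianPDFReal 0 1 x).continuousAt

theorem stdNormalCDF_zero : stdNormalCDF 0 = 1 / 2 := by
  rw [stdNormalCDF_eq_integral, integral_Iic_zero_of_even (integrable_gaussianPDFReal 0 1)
    (even_gaussianPDFReal_zero 1), integral_gaussianPDFReal_eq_one 0 one_ne_zero]
  norm_num

theorem norm_stdNormalCDF_le_one (x : ℝ) : ‖stdNormalCDF x‖ ≤ 1 := by
  rw [stdNormalCDF_eq_cdf, Real.norm_of_nonneg (cdf_nonneg _ x)]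
  exact cdf_le_one _ x

theorem tendsto_stdNormalCDF_atBot : Tendsto stdNormalCDF atBot (𝓝 0) :=
  stdNormalCDF_eq_cdf ▸ tendsto_cdf_atBot _

theorem continuous_stdNormalCDF : Continuous stdNormalCDF :=
  continuous_iff_continuousAt.2 fun x => (hasDerivAt_stdNormalCDF x).continuousAt

theorem exp_neg_mul_gaussianPDFReal_div {σ : ℝ} (hσ : σ ≠ 0) (z : ℝ) :
    exp (-z) * φ (z / σ) = exp (σ ^ 2 / 2) * φ ((z + σ ^ 2) / σ) := by
  simp only [gaussianPDFReal, NNReal.coe_one, mul_left_comm (exp _), ← exp_add]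
  congr 2
  field_simp
  ring

theorem hasDerivAt_neg_one_add_mul_exp_neg (z : ℝ) :
    HasDerivAt (fun z => -(1 + z) * exp (-z)) (z * exp (-z)) z := by
  have hexp : HasDerivAt (fun z => exp (-z)) (-exp (-z)) z := by
    simpa using (hasDerivAt_neg z).exp
  exact (((hasDerivAt_id z).const_add 1).neg.mul hexp).congr_deriv
    (by simp only [Pi.neg_apply, id]; ring)

theorem hasDerivAt_mul_gaussianPDFReal_sub_mul_stdNormalCDF_neg (σ w : ℝ) :
    HasDerivAt (fun w => σ * φ w - (σ ^ 2 - 1) * stdNormalCDF (-w))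
      ((σ ^ 2 - 1 - σ * w) * φ w) w := by
  have hcdf : HasDerivAt (fun w => stdNormalCDF (-w)) (-φ w) w := by
    have h := (hasDerivAt_stdNormalCDF (-w)).comp w (hasDerivAt_neg w)
    rwa [even_gaussianPDFReal_zero 1, mul_neg_one] at h
  refine (((hasDerivAt_gaussianPDFReal 0 1 w).const_mul σ).sub (hcdf.const_mul _)).congr_deriv ?_
  simp only [sub_zero, NNReal.coe_one, div_one]
  ring

noncomputable def primitiveMulCDFExp (σ z : ℝ) : ℝ :=
  -(1 + z) * exp (-z) * stdNormalCDF (-z / σ)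
    + exp (σ ^ 2 / 2) *
      (σ * φ ((z + σ ^ 2) / σ) - (σ ^ 2 - 1) * stdNormalCDF (-((z + σ ^ 2) / σ)))

theorem hasDerivAt_primitiveMulCDFExp {σ : ℝ} (hσ : σ ≠ 0) (z : ℝ) :
    HasDerivAt (primitiveMulCDFExp σ) (z * stdNormalCDF (-z / σ) * exp (-z)) z := by
  have hΦ : HasDerivAt (fun z => stdNormalCDF (-z / σ)) (φ (z / σ) * (-1 / σ)) z := by
    have h := (hasDerivAt_stdNormalCDF (-z / σ)).comp z ((hasDerivAt_neg z).div_const σ)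
    rw [neg_div, even_gaussianPDFReal_zero 1] at h
    exact h
  have hw : HasDerivAt (fun z => (z + σ ^ 2) / σ) (1 / σ) z :=
    ((hasDerivAt_id z).add_const _).div_const σ
  have htail := (hasDerivAt_mul_gaussianPDFReal_sub_mul_stdNormalCDF_neg σ _).comp z hw
  refine (((hasDerivAt_neg_one_add_mul_exp_neg z).mul hΦ).add
    (htail.const_mul (exp (σ ^ 2 / 2)))).congr_deriv ?_
  have hsq := exp_neg_mul_gaussianPDFReal_div hσ z
  rw [mul_div_cancel₀ _ hσ]
  linear_combination (1 + z) / σ * hsq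

theorem tendsto_primitiveMulCDFExp_atTop {σ : ℝ} (hσ : 0 < σ) :
    Tendsto (primitiveMulCDFExp σ) atTop (𝓝 0) := by
  have hpoly : Tendsto (fun z => -(1 + z) * exp (-z)) atTop (𝓝 0) := by
    have h := (tendsto_exp_neg_atTop_nhds_zero.add (tendsto_pow_mul_exp_neg_atTop_nhds_zero 1)).neg
    rw [add_zero, neg_zero] at h
    exact h.congr fun z => by ring
  have hw : Tendsto (fun z => (z + σ ^ 2) / σ) atTop atTop :=
    (tendsto_atTop_add_const_right _ _ tendsto_id).atTop_div_const hσ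
  have hφ := (tendsto_gaussianPDFReal_atTop 0 1).comp hw
  have hΦ := tendsto_stdNormalCDF_atBot.comp (tendsto_neg_atTop_atBot.comp hw)
  have h := (hpoly.zero_mul_isBoundedUnder_le
      (isBoundedUnder_of ⟨1, fun z => norm_stdNormalCDF_le_one (-z / σ)⟩)).add
    (((hφ.const_mul σ).sub (hΦ.const_mul (σ ^ 2 - 1))).const_mul (exp (σ ^ 2 / 2)))
  rwa [mul_zero, mul_zero, sub_zero, mul_zero, add_zero] at h

theorem integrableOn_mul_stdNormalCDF_mul_exp_neg (σ : ℝ) :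
    IntegrableOn (fun z => z * stdNormalCDF (-z / σ) * exp (-z)) (Ioi 0) := by
  have hgamma : IntegrableOn (fun z : ℝ => exp (-z) * z ^ ((2 : ℝ) - 1)) (Ioi 0) :=
    GammaIntegral_convergent two_pos
  simp only [show (2 : ℝ) - 1 = 1 by norm_num, rpow_one] at hgamma
  refine (hgamma.bdd_mul (f := fun z => stdNormalCDF (-z / σ)) (c := 1) ?_ ?_).congr
    (ae_of_all _ fun z => by ring)
  · exact (continuous_stdNormalCDF.comp (continuous_neg.div_const σ)).aestronglyMeasurable
  · exact ae_of_all _ fun z => norm_stdNormalCDF_le_one _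

/-- For every `σ > 0`,
`∫₀^∞ z Φ(−z/σ) e^{−z} dz = 1/2 + (σ² − 1) e^{σ²/2} Φ(−σ) − σ/√(2π)`. -/
theorem stmt14 (σ : ℝ) (hσ : 0 < σ) :
    ∫ z in Ioi (0:ℝ), z * stdNormalCDF (-z / σ) * Real.exp (-z)
      = 1 / 2 + (σ ^ 2 - 1) * Real.exp (σ ^ 2 / 2) * stdNormalCDF (-σ)
        - σ / Real.sqrt (2 * Real.pi) := by
  rw [integral_Ioi_of_hasDerivAt_of_tendsto' (fun z _ => hasDerivAt_primitiveMulCDFExp hσ.ne' z)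
    (integrableOn_mul_stdNormalCDF_mul_exp_neg σ) (tendsto_primitiveMulCDFExp_atTop hσ)]
  have hw : (0 + σ ^ 2) / σ = σ := by rw [zero_add]; field_simp
  have hφσ : exp (σ ^ 2 / 2) * φ σ = (√(2 * π))⁻¹ := by
    have h := exp_neg_mul_gaussianPDFReal_div hσ.ne' 0
    rw [hw] at h
    simpa [gaussianPDFReal] using h.symm
  simp only [primitiveMulCDFExp, hw, neg_zero, zero_div, stdNormalCDF_zero, add_zero, exp_zero]
  linear_combination (-σ) * hφσ
end

section
/- Fix β > 0, ε ∈ (0, 1), and α > 0, and define L(v) = ∫ max{ v (μ(y) − η(y)) / (η(y) + μ(y)/β), −1 + ε } · (μ(y) − η(y)) dy for v ≥ 0 (integrand taken to be 0 where η + μ/β = 0). If the set {y : μ(y) > η(y)} has positive measure and ∫_{{μ>η}} (μ(y) − η(y))²/(η(y) + μ(y)/β) dy > 0, then L is nondecreasing on [0, ∞), L(0) = 0, L(v) → ∞ as v → ∞, and there exists a unique v > 0 with L(v) = 1/α. -/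
open MeasureTheory Filter Set

/-!
Write `d = μ - η` and `r = (μ - η) / (η + μ / β)`, so that `r d ≥ 0` and `-1 ≤ r ≤ β`.
Where `d > 0` we have `r ≥ 0`, so for `v ≥ 0` the truncation at `-1 + ε ≤ 0` is inactive and the
integrand grows linearly in `v` with slope `r d`; where `d ≤ 0` we have `r ≤ 0`, and the integrand
is still nondecreasing in `v`. Hence `L v - L u ≥ (v - u) I` for `0 ≤ u ≤ v`, where
`I = ∫_{d > 0} r d > 0`: `L` is strictly increasing on `[0, ∞)` and grows at least linearly.
As `r` is bounded and `d` integrable, `L` is Lipschitz, and the intermediate value theorem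
yields the unique solution of `L v = 1 / α`.
-/

theorem existsUnique_gt_eq_of_strictMonoOn {α δ : Type*} [ConditionallyCompleteLinearOrder α]
    [TopologicalSpace α] [OrderTopology α] [DenselyOrdered α] [LinearOrder δ]
    [TopologicalSpace δ] [OrderClosedTopology δ] {f : α → δ} {a : α} {t : δ}
    (hf : ContinuousOn f (Ici a)) (hmono : StrictMonoOn f (Ici a))
    (htop : Tendsto f atTop atTop) (ht : f a < t) :
    ∃! v, a < v ∧ f v = t := by
  obtain ⟨v, hav, hvt⟩ := intermediate_value_Ici hf htop ht.le
  refine ⟨v, ⟨hav.lt_of_ne ?_, hvt⟩,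
    fun w ⟨haw, hwt⟩ => hmono.injOn haw.le hav (hwt.trans hvt.symm)⟩
  rintro rfl
  exact ht.ne hvt

section

variable {r d c u v : ℝ}

lemma max_mul_sub_max_mul_of_pos (hc : c ≤ 0) (hrd : 0 ≤ r * d) (hd : 0 < d) (hu : 0 ≤ u)
    (huv : u ≤ v) : max (v * r) c * d - max (u * r) c * d = (v - u) * (r * d) := by
  have hr : 0 ≤ r := nonneg_of_mul_nonneg_left hrd hd
  rw [max_eq_left (hc.trans (mul_nonneg (hu.trans huv) hr)),
    max_eq_left (hc.trans (mul_nonneg hu hr))]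
  ring

lemma max_mul_le_max_mul_of_nonpos (hrd : 0 ≤ r * d) (hd : d ≤ 0) (huv : u ≤ v) :
    max (u * r) c * d ≤ max (v * r) c * d := by
  by_cases hr : r ≤ 0
  · exact mul_le_mul_of_nonpos_right
      (max_le_max_right c (mul_le_mul_of_nonpos_right huv hr)) hd
  · have hd0 : d = 0 := le_antisymm hd (nonneg_of_mul_nonneg_right hrd (not_le.1 hr))
    simp [hd0]

end

/-- With `m = volume`, `r = diffRatio β η μ`, `d = μ - η` and `c = -1 + ε` this is `L v`. -/
noncomputable def truncPairing {α : Type*} [MeasurableSpace α] (m : Measure α) (r d : α → ℝ)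
    (c v : ℝ) : ℝ :=
  ∫ y, max (v * r y) c * d y ∂m

section

variable {α : Type*} [MeasurableSpace α] {m : Measure α} {r d : α → ℝ} {c M : ℝ}

theorem truncPairing_zero (hc : c ≤ 0) : truncPairing m r d c 0 = 0 := by
  simp [truncPairing, max_eq_left hc]

theorem integrable_max_mul (hr : AEStronglyMeasurable r m) (hrM : ∀ᵐ y ∂m, |r y| ≤ M)
    (hd : Integrable d m) (v : ℝ) : Integrable (fun y => max (v * r y) c * d y) m := by
  refine hd.bdd_mul (c := max (|v| * M) |c|) ((hr.const_mul v).sup aestronglyMeasurable_const) ?_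
  filter_upwards [hrM] with y hy
  refine abs_max_le_max_abs_abs.trans (max_le_max_right _ ?_)
  rw [abs_mul]
  exact mul_le_mul_of_nonneg_left hy (abs_nonneg v)

theorem lipschitzWith_truncPairing (hr : AEStronglyMeasurable r m) (hrM : ∀ᵐ y ∂m, |r y| ≤ M)
    (hd : Integrable d m) :
    LipschitzWith (M * ∫ y, |d y| ∂m).toNNReal (truncPairing m r d c) := by
  refine LipschitzWith.of_dist_le_mul fun u v => ?_
  rw [Real.dist_eq, Real.dist_eq, truncPairing, truncPairing,
    ← integral_sub (integrable_max_mul hr hrM hd u) (integrable_max_mul hr hrM hd v)]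
  calc ‖∫ y, (max (u * r y) c * d y - max (v * r y) c * d y) ∂m‖
      ≤ ∫ y, |u - v| * (M * |d y|) ∂m := by
        refine norm_integral_le_of_norm_le ((hd.abs.const_mul M).const_mul _) ?_
        filter_upwards [hrM] with y hy
        rw [Real.norm_eq_abs, ← sub_mul, abs_mul, ← mul_assoc]
        gcongr
        calc |max (u * r y) c - max (v * r y) c| ≤ |u * r y - v * r y| :=
              abs_max_sub_max_le_abs _ _ _
          _ = |u - v| * |r y| := by rw [← sub_mul, abs_mul]
          _ ≤ |u - v| * M := by gcongr
    _ = M * (∫ y, |d y| ∂m) * |u - v| := by rw [integral_const_mul, integral_const_mul]; ring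
    _ ≤ _ := by gcongr; exact Real.le_coe_toNNReal _

theorem truncPairing_add_mul_le (hc : c ≤ 0) (hr : AEStronglyMeasurable r m)
    (hrM : ∀ᵐ y ∂m, |r y| ≤ M) (hd : Integrable d m) (hrd : ∀ᵐ y ∂m, 0 ≤ r y * d y)
    {u v : ℝ} (hu : 0 ≤ u) (huv : u ≤ v) :
    truncPairing m r d c u + (v - u) * ∫ y in {y | 0 < d y}, r y * d y ∂m ≤
      truncPairing m r d c v := by
  have hs : NullMeasurableSet {y | 0 < d y} m :=
    nullMeasurableSet_lt aemeasurable_const hd.aemeasurable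
  have hgain : Integrable ({y | 0 < d y}.indicator fun y => (v - u) * (r y * d y)) m :=
    ((hd.bdd_mul hr (by simpa only [Real.norm_eq_abs] using hrM)).const_mul _).indicator₀ hs
  rw [← integral_const_mul, ← integral_indicator₀ hs, truncPairing, truncPairing,
    ← integral_add (integrable_max_mul hr hrM hd u) hgain]
  refine integral_mono_ae ((integrable_max_mul hr hrM hd u).add hgain)
    (integrable_max_mul hr hrM hd v) ?_
  filter_upwards [hrd] with y hy
  by_cases hdy : 0 < d y
  · have hslope := max_mul_sub_max_mul_of_pos (c := c) hc hy hdy hu huv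
    simp only [indicator_of_mem (show y ∈ {y | 0 < d y} from hdy)]
    linarith
  · simp only [indicator_of_notMem (show y ∉ {y | 0 < d y} from hdy), add_zero]
    exact max_mul_le_max_mul_of_nonpos hy (not_lt.1 hdy) huv

theorem strictMonoOn_truncPairing (hc : c ≤ 0) (hr : AEStronglyMeasurable r m)
    (hrM : ∀ᵐ y ∂m, |r y| ≤ M) (hd : Integrable d m) (hrd : ∀ᵐ y ∂m, 0 ≤ r y * d y)
    (hI : 0 < ∫ y in {y | 0 < d y}, r y * d y ∂m) :
    StrictMonoOn (truncPairing m r d c) (Ici 0) := fun _ hu _ _ huv =>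
  (lt_add_of_pos_right _ (mul_pos (sub_pos.2 huv) hI)).trans_le
    (truncPairing_add_mul_le hc hr hrM hd hrd hu huv.le)

theorem tendsto_truncPairing_atTop (hc : c ≤ 0) (hr : AEStronglyMeasurable r m)
    (hrM : ∀ᵐ y ∂m, |r y| ≤ M) (hd : Integrable d m) (hrd : ∀ᵐ y ∂m, 0 ≤ r y * d y)
    (hI : 0 < ∫ y in {y | 0 < d y}, r y * d y ∂m) :
    Tendsto (truncPairing m r d c) atTop atTop := by
  refine tendsto_atTop_mono' atTop ?_ (tendsto_id.atTop_mul_const hI)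
  filter_upwards [eventually_ge_atTop 0] with v hv
  simpa [truncPairing_zero hc] using truncPairing_add_mul_le hc hr hrM hd hrd le_rfl hv

end

noncomputable def diffRatio (β a b : ℝ) : ℝ :=
  if a + b / β = 0 then 0 else (b - a) / (a + b / β)

section

variable {β a b : ℝ}

theorem Measurable.diffRatio {α : Type*} [MeasurableSpace α] {f g : α → ℝ} (hf : Measurable f)
    (hg : Measurable g) : Measurable fun y => diffRatio β (f y) (g y) := by
  have hw : Measurable fun y => f y + g y / β := hf.add (hg.div_const β)
  exact Measurable.ite (hw (measurableSet_singleton 0)) measurable_const ((hg.sub hf).div hw)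

theorem diffRatio_mul_sub :
    diffRatio β a b * (b - a) = if a + b / β = 0 then 0 else (b - a) ^ 2 / (a + b / β) := by
  unfold diffRatio
  split_ifs <;> ring

theorem diffRatio_mul_sub_nonneg (hβ : 0 < β) (ha : 0 ≤ a) (hb : 0 ≤ b) :
    0 ≤ diffRatio β a b * (b - a) := by
  rw [diffRatio_mul_sub]
  split_ifs
  · rfl
  · exact div_nonneg (sq_nonneg _) (add_nonneg ha (div_nonneg hb hβ.le))

theorem abs_diffRatio_le (hβ : 0 < β) (ha : 0 ≤ a) (hb : 0 ≤ b) :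
    |diffRatio β a b| ≤ max β 1 := by
  unfold diffRatio
  split_ifs with hw0
  · simp
  have hw : 0 < a + b / β := (add_nonneg ha (div_nonneg hb hβ.le)).lt_of_ne' hw0
  have hb_eq : b = β * (b / β) := by field_simp
  rw [abs_le, le_div_iff₀ hw, div_le_iff₀ hw]
  constructor <;> nlinarith [le_max_left β 1, le_max_right β 1, div_nonneg hb hβ.le]

end

theorem stmt17_general (η μ : ℝ → ℝ) (hηm : Measurable η) (hμm : Measurable μ)
    (hη0 : ∀ y, 0 ≤ η y) (hμ0 : ∀ y, 0 ≤ μ y)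
    (hη1 : ∫ y, η y = 1) (hμ1 : ∫ y, μ y = 1)
    (β ε α : ℝ) (hβ : 0 < β) (hε : ε ∈ Ioo (0:ℝ) 1) (hα : 0 < α)
    (hIpos : 0 < ∫ y in {y | η y < μ y},
        (if η y + μ y / β = 0 then 0 else (μ y - η y) ^ 2 / (η y + μ y / β)))
    (L : ℝ → ℝ)
    (hL : ∀ v, L v = ∫ y,
        max (v * (if η y + μ y / β = 0 then 0 else (μ y - η y) / (η y + μ y / β)))
            (-1 + ε) * (μ y - η y)) :
    MonotoneOn L (Ici 0) ∧ L 0 = 0 ∧ Tendsto L atTop atTop ∧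
    ∃! v : ℝ, 0 < v ∧ L v = 1 / α := by
  have hLr : L = truncPairing volume (fun y => diffRatio β (η y) (μ y)) (fun y => μ y - η y)
      (-1 + ε) := funext hL
  have hc : -1 + ε ≤ 0 := by linarith [hε.2]
  have hr : AEStronglyMeasurable (fun y => diffRatio β (η y) (μ y)) :=
    (hηm.diffRatio hμm).aestronglyMeasurable
  have hrM := ae_of_all volume fun y => abs_diffRatio_le hβ (hη0 y) (hμ0 y)
  have hd : Integrable (fun y => μ y - η y) :=
    (Integrable.of_integral_ne_zero (by simp [hμ1])).sub
      (Integrable.of_integral_ne_zero (by simp [hη1]))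
  have hrd := ae_of_all volume fun y => diffRatio_mul_sub_nonneg hβ (hη0 y) (hμ0 y)
  have hI : 0 < ∫ y in {y | 0 < μ y - η y}, diffRatio β (η y) (μ y) * (μ y - η y) := by
    simpa only [sub_pos, diffRatio_mul_sub] using hIpos
  have hmono := strictMonoOn_truncPairing hc hr hrM hd hrd hI
  have htop := tendsto_truncPairing_atTop hc hr hrM hd hrd hI
  rw [hLr]
  refine ⟨hmono.monotoneOn, truncPairing_zero hc, htop, ?_⟩
  refine existsUnique_gt_eq_of_strictMonoOn
    (lipschitzWith_truncPairing hr hrM hd).continuous.continuousOn hmono htop ?_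
  rw [truncPairing_zero hc]
  positivity

/-- Properties of the linear-constraint functional
`L(v) = ∫ max{v (μ(y) − η(y))/(η(y) + μ(y)/β), −1 + ε} (μ(y) − η(y)) dy`
(integrand ratio taken to be `0` where `η + μ/β = 0`): if `{μ > η}` has
positive measure and `∫_{{μ>η}} (μ − η)²/(η + μ/β) > 0`, then `L` is
nondecreasing on `[0, ∞)`, `L(0) = 0`, `L(v) → ∞` as `v → ∞`, and there is a
unique `v > 0` with `L(v) = 1/α`. -/
theorem stmt17 (η μ : ℝ → ℝ) (hηm : Measurable η) (hμm : Measurable μ)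
    (hη0 : ∀ y, 0 ≤ η y) (hμ0 : ∀ y, 0 ≤ μ y)
    (hη1 : ∫ y, η y = 1) (hμ1 : ∫ y, μ y = 1)
    (β ε α : ℝ) (hβ : 0 < β) (hε : ε ∈ Ioo (0:ℝ) 1) (hα : 0 < α)
    (hpos : 0 < volume {y | η y < μ y})
    (hIpos : 0 < ∫ y in {y | η y < μ y},
        (if η y + μ y / β = 0 then 0 else (μ y - η y) ^ 2 / (η y + μ y / β)))
    (L : ℝ → ℝ)
    (hL : ∀ v, L v = ∫ y,
        max (v * (if η y + μ y / β = 0 then 0 else (μ y - η y) / (η y + μ y / β)))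
            (-1 + ε) * (μ y - η y)) :
    MonotoneOn L (Ici 0) ∧ L 0 = 0 ∧ Tendsto L atTop atTop ∧
    ∃! v : ℝ, 0 < v ∧ L v = 1 / α :=
  stmt17_general η μ hηm hμm hη0 hμ0 hη1 hμ1 β ε α hβ hε hα hIpos L hL
end

section
/- Fix α > 0, β > 0, and ε ∈ (0, 1). Set c*(y) = (μ(y) − η(y))/(η(y) + μ(y)/β) (taken to be 0 where η + μ/β = 0) and suppose ∫ c*(y)(μ(y) − η(y)) dy = 1/α and I := ∫_{{μ>η}} (μ(y) − η(y))²/(η(y) + μ(y)/β) dy > 0. Let v_ε be the unique positive number such that ∫ max{ v_ε c*(y), −1 + ε } (μ(y) − η(y)) dy = 1/α. Then 1 ≤ v_ε ≤ 1 + 2ε/I; in particular v_ε → 1 as ε → 0⁺. -/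
open MeasureTheory Filter Topology Set

/-!
Write `f = μ - η` and `c = c*`; `c` has the sign of `f`, and `c * f` is the integrand of `I`.
Subtracting the two constraints gives `∫ (max (v c) (-1 + ε) - c) f = 0`.
If `v < 1`, the integrand is `≤ 0` everywhere and `< 0` on `{f > 0}`, which has positive measure;
hence `v ≥ 1`. If `v ≥ 1`, the integrand is `(v - 1) c f` on `{f > 0}` and at least `ε f` on
`{f ≤ 0}`, where `max (v c) (-1 + ε) - c ≤ ε` because `-1 ≤ c ≤ 0`; so
`(v - 1) I ≤ ε ∫_{f ≤ 0} (η - μ) ≤ ε`.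
-/

noncomputable def cstarAt (β a b : ℝ) : ℝ :=
  if a + b / β = 0 then 0 else (b - a) / (a + b / β)

section CstarAt

variable {β a b : ℝ}

lemma cstarAt_pos (hβ : 0 < β) (ha : 0 ≤ a) (hab : a < b) : 0 < cstarAt β a b := by
  have hden : 0 < a + b / β := by
    have : 0 < b / β := div_pos (ha.trans_lt hab) hβ
    linarith
  rw [cstarAt, if_neg hden.ne']
  exact div_pos (sub_pos.2 hab) hden

lemma cstarAt_nonpos (hβ : 0 < β) (ha : 0 ≤ a) (hb : 0 ≤ b) (hba : b - a ≤ 0) :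
    cstarAt β a b ≤ 0 := by
  unfold cstarAt
  split_ifs
  · exact le_rfl
  · exact div_nonpos_of_nonpos_of_nonneg hba (add_nonneg ha (div_nonneg hb hβ.le))

lemma cstarAt_mul_sub (β a b : ℝ) :
    cstarAt β a b * (b - a) = if a + b / β = 0 then 0 else (b - a) ^ 2 / (a + b / β) := by
  unfold cstarAt
  split_ifs
  · exact zero_mul _
  · ring

end CstarAt

section Measure

variable {X : Type*} [MeasurableSpace X] {m : Measure X} {f c : X → ℝ} {v ε : ℝ}

lemma Measurable.cstarAt {η μ : X → ℝ} (hη : Measurable η) (hμ : Measurable μ) (β : ℝ) :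
    Measurable fun x => cstarAt β (η x) (μ x) :=
  have hden : Measurable fun x => η x + μ x / β := hη.add (hμ.div_const β)
  Measurable.ite (hden (measurableSet_singleton 0)) measurable_const ((hμ.sub hη).div hden)

lemma setIntegral_sub_le_integral {η μ : X → ℝ} (hη : Integrable η m) (hμ : Integrable μ m)
    (hη0 : ∀ x, 0 ≤ η x) (hμ0 : ∀ x, 0 ≤ μ x) (s : Set X) :
    ∫ x in s, η x - μ x ∂m ≤ ∫ x, η x ∂m :=
  calc _ ≤ ∫ x in s, η x ∂m :=
        setIntegral_mono (hη.sub hμ).integrableOn hη.integrableOn fun x => sub_le_self _ (hμ0 x)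
    _ ≤ ∫ x, η x ∂m := setIntegral_le_integral hη (ae_of_all _ hη0)

lemma MeasureTheory.Integrable.max_const_mul_mul {B : ℝ} (hf : Integrable f m)
    (hc : Measurable c) (hcB : ∀ x, ‖c x‖ ≤ B) (v a : ℝ) :
    Integrable (fun x => max (v * c x) a * f x) m := by
  refine hf.bdd_mul ((measurable_const.mul hc).max measurable_const).aestronglyMeasurable
    (c := |v| * B + |a|) (ae_of_all _ fun x => ?_)
  have hvc : |v * c x| ≤ |v| * B := by
    rw [abs_mul, ← Real.norm_eq_abs (c x)]
    exact mul_le_mul_of_nonneg_left (hcB x) (abs_nonneg v)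
  rw [Real.norm_eq_abs]
  exact (abs_max_le_max_abs_abs).trans
    (max_le (by linarith [abs_nonneg a]) (by linarith [abs_nonneg v, (abs_nonneg _).trans hvc]))

lemma one_le_of_integral_max_mul_eq
    (hcf : Integrable (fun x => c x * f x) m)
    (hmf : Integrable (fun x => max (v * c x) (-1 + ε) * f x) m)
    (hc_pos : ∀ x, 0 < f x → 0 < c x) (hc_nonpos : ∀ x, f x ≤ 0 → c x ≤ 0)
    (hε : ε < 1) (hm : 0 < m {x | 0 < f x})
    (heq : ∫ x, max (v * c x) (-1 + ε) * f x ∂m = ∫ x, c x * f x ∂m) : 1 ≤ v := by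
  by_contra! hv
  set g := fun x => c x * f x - max (v * c x) (-1 + ε) * f x
  have hg_nonneg : 0 ≤ g := fun x => by
    rcases lt_or_ge 0 (f x) with hf | hf
    · have hc := hc_pos x hf
      have : max (v * c x) (-1 + ε) ≤ c x := max_le (by nlinarith) (by linarith)
      simp only [g, Pi.zero_apply, sub_nonneg]
      exact mul_le_mul_of_nonneg_right this hf.le
    · have hc := hc_nonpos x hf
      have : c x ≤ max (v * c x) (-1 + ε) :=
        (by nlinarith : c x ≤ v * c x).trans (le_max_left _ _)
      simp only [g, Pi.zero_apply, sub_nonneg]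
      exact mul_le_mul_of_nonpos_right this hf
  have hg_supp : {x | 0 < f x} ⊆ Function.support g := fun x (hf : 0 < f x) => by
    have hc := hc_pos x hf
    have : max (v * c x) (-1 + ε) < c x := max_lt (by nlinarith) (by linarith)
    exact (sub_pos.2 (mul_lt_mul_of_pos_right this hf)).ne'
  have hg_pos : 0 < ∫ x, g x ∂m :=
    (integral_pos_iff_support_of_nonneg hg_nonneg (hcf.sub hmf)).2
      (hm.trans_le (measure_mono hg_supp))
  rw [integral_sub hcf hmf, heq, sub_self] at hg_pos
  exact hg_pos.false

lemma sub_one_mul_setIntegral_le (hf : Measurable f) (hfi : Integrable f m)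
    (hcf : Integrable (fun x => c x * f x) m)
    (hmf : Integrable (fun x => max (v * c x) (-1 + ε) * f x) m)
    (hc_pos : ∀ x, 0 < f x → 0 < c x) (hc_nonpos : ∀ x, f x ≤ 0 → c x ≤ 0)
    (hc : ∀ x, -1 ≤ c x) (hv : 1 ≤ v) (hε₀ : 0 ≤ ε) (hε₁ : ε ≤ 1)
    (heq : ∫ x, max (v * c x) (-1 + ε) * f x ∂m = ∫ x, c x * f x ∂m) :
    (v - 1) * ∫ x in {x | 0 < f x}, c x * f x ∂m ≤ ε * ∫ x in {x | 0 < f x}ᶜ, -f x ∂m := by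
  set S := {x | 0 < f x}
  have hS : MeasurableSet S := measurableSet_lt measurable_const hf
  set g := fun x => (max (v * c x) (-1 + ε) - c x) * f x
  have hg : Integrable g m := (hmf.sub hcf).congr (ae_of_all _ fun x => by simp [g, sub_mul])
  have hg_zero : ∫ x, g x ∂m = 0 := by
    simp only [g, sub_mul]; rw [integral_sub hmf hcf, heq, sub_self]
  have hg_S : ∫ x in S, g x ∂m = (v - 1) * ∫ x in S, c x * f x ∂m := by
    rw [← integral_const_mul]
    refine setIntegral_congr_fun hS fun x (hx : 0 < f x) => ?_
    have hc := hc_pos x hx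
    simp only [g, max_eq_left (by nlinarith : -1 + ε ≤ v * c x)]
    ring
  have hg_Sc : ∫ x in Sᶜ, ε * f x ∂m ≤ ∫ x in Sᶜ, g x ∂m := by
    refine setIntegral_mono_on (hfi.const_mul ε).integrableOn hg.integrableOn hS.compl
      fun x (hx : ¬ 0 < f x) => ?_
    have hfx : f x ≤ 0 := not_lt.1 hx
    have hc' := hc_nonpos x hfx
    have : max (v * c x) (-1 + ε) - c x ≤ ε :=
      sub_le_iff_le_add'.2 (max_le (by nlinarith) (by linarith [hc x]))
    exact mul_le_mul_of_nonpos_right this hfx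
  have hsplit := integral_add_compl hS hg
  rw [hg_zero, hg_S] at hsplit
  rw [integral_const_mul] at hg_Sc
  rw [integral_neg]
  linarith

end Measure

lemma tendsto_nhdsGT_of_forall_Ioo {v : ℝ → ℝ} {a K : ℝ}
    (h : ∀ ε ∈ Ioo (0 : ℝ) 1, a ≤ v ε ∧ v ε ≤ a + K * ε) : Tendsto v (𝓝[>] 0) (𝓝 a) := by
  have hub : Tendsto (fun ε : ℝ => a + K * ε) (𝓝[>] 0) (𝓝 a) := by
    have hc : Continuous fun ε : ℝ => a + K * ε := by fun_prop
    simpa using (hc.tendsto 0).mono_left nhdsWithin_le_nhds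
  have hmem : Ioo (0 : ℝ) 1 ∈ 𝓝[>] (0 : ℝ) := Ioo_mem_nhdsGT one_pos
  exact tendsto_of_tendsto_of_tendsto_of_le_of_le' tendsto_const_nhds hub
    (eventually_of_mem hmem fun ε hε => (h ε hε).1)
    (eventually_of_mem hmem fun ε hε => (h ε hε).2)

theorem stmt18_general (η μ : ℝ → ℝ) (hηm : Measurable η) (hμm : Measurable μ)
    (hη0 : ∀ y, 0 ≤ η y) (hμ0 : ∀ y, 0 ≤ μ y)
    (hη1 : ∫ y, η y = 1) (hμ1 : ∫ y, μ y = 1)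
    (α β : ℝ) (hβ : 0 < β)
    (hpos : 0 < volume {y | η y < μ y})
    (cstar : ℝ → ℝ)
    (hcs : cstar = fun y =>
        if η y + μ y / β = 0 then 0 else (μ y - η y) / (η y + μ y / β))
    (hclb : ∀ y, -1 ≤ cstar y) (hcub : ∀ y, cstar y ≤ β)
    (hconstr : ∫ y, cstar y * (μ y - η y) = 1 / α)
    (I : ℝ)
    (hI : I = ∫ y in {y | η y < μ y},
        (if η y + μ y / β = 0 then 0 else (μ y - η y) ^ 2 / (η y + μ y / β)))
    (hIpos : 0 < I)
    (v : ℝ → ℝ)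
    (hv : ∀ ε ∈ Ioo (0:ℝ) 1, 0 < v ε ∧
        ∫ y, max (v ε * cstar y) (-1 + ε) * (μ y - η y) = 1 / α) :
    (∀ ε ∈ Ioo (0:ℝ) 1, 1 ≤ v ε ∧ v ε ≤ 1 + 2 * ε / I) ∧
    Tendsto v (𝓝[>] 0) (𝓝 1) := by
  have hηi : Integrable η := .of_integral_ne_zero (by simp [hη1])
  have hμi : Integrable μ := .of_integral_ne_zero (by simp [hμ1])
  have hcs' : ∀ y, cstar y = cstarAt β (η y) (μ y) := fun y => by rw [hcs]; rfl
  have hcm : Measurable cstar := (funext hcs') ▸ hηm.cstarAt hμm β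
  have hcB : ∀ y, ‖cstar y‖ ≤ max 1 β := fun y => Real.norm_eq_abs _ ▸
    abs_le.2 ⟨by linarith [hclb y, le_max_left 1 β], (hcub y).trans (le_max_right 1 β)⟩
  have hc_pos : ∀ y, 0 < μ y - η y → 0 < cstar y := fun y h =>
    hcs' y ▸ cstarAt_pos hβ (hη0 y) (sub_pos.1 h)
  have hc_nonpos : ∀ y, μ y - η y ≤ 0 → cstar y ≤ 0 := fun y h =>
    hcs' y ▸ cstarAt_nonpos hβ (hη0 y) (hμ0 y) h
  have hI' : I = ∫ y in {y | 0 < μ y - η y}, cstar y * (μ y - η y) := by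
    simp only [hI, hcs', cstarAt_mul_sub, sub_pos]
  have hfi : Integrable (fun y => μ y - η y) := hμi.sub hηi
  have hcf := hfi.bdd_mul hcm.aestronglyMeasurable (ae_of_all _ hcB)
  have bounds : ∀ ε ∈ Ioo (0:ℝ) 1, 1 ≤ v ε ∧ v ε ≤ 1 + 2 * ε / I := by
    rintro ε ⟨hε₀, hε₁⟩
    have heq := (hv ε ⟨hε₀, hε₁⟩).2.trans hconstr.symm
    have hmf := hfi.max_const_mul_mul hcm hcB (v ε) (-1 + ε)
    have hv₁ := one_le_of_integral_max_mul_eq hcf hmf hc_pos hc_nonpos hε₁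
      (by simpa only [sub_pos] using hpos) heq
    have hvI := sub_one_mul_setIntegral_le (f := fun y => μ y - η y) (hμm.sub hηm) hfi hcf hmf
      hc_pos hc_nonpos hclb hv₁ hε₀.le hε₁.le heq
    have htv := setIntegral_sub_le_integral hηi hμi hη0 hμ0 {y | 0 < μ y - η y}ᶜ
    simp only [← hI', neg_sub, hη1] at hvI htv
    refine ⟨hv₁, ?_⟩
    rw [← sub_le_iff_le_add', le_div_iff₀ hIpos]
    linarith [mul_le_mul_of_nonneg_left htv hε₀.le]
  refine ⟨bounds, tendsto_nhdsGT_of_forall_Ioo (K := 2 / I) fun ε hε => ?_⟩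
  simpa only [div_mul_eq_mul_div] using bounds ε hε

/-- With `c*(y) = (μ(y) − η(y))/(η(y) + μ(y)/β)` (taken `0` where
`η + μ/β = 0`), `∫ c* (μ − η) = 1/α`, and
`I = ∫_{{μ>η}} (μ − η)²/(η + μ/β) > 0`: if for each `ε ∈ (0,1)` the number
`v ε` is positive and satisfies `∫ max{v ε ⬝ c*, −1 + ε} (μ − η) = 1/α`, then
`1 ≤ v ε ≤ 1 + 2ε/I`; in particular `v ε → 1` as `ε → 0⁺`. -/
theorem stmt18 (η μ : ℝ → ℝ) (hηm : Measurable η) (hμm : Measurable μ)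
    (hη0 : ∀ y, 0 ≤ η y) (hμ0 : ∀ y, 0 ≤ μ y)
    (hη1 : ∫ y, η y = 1) (hμ1 : ∫ y, μ y = 1)
    (α β : ℝ) (hα : 0 < α) (hβ : 0 < β)
    (hpos : 0 < volume {y | η y < μ y})
    (cstar : ℝ → ℝ)
    (hcs : cstar = fun y =>
        if η y + μ y / β = 0 then 0 else (μ y - η y) / (η y + μ y / β))
    (hclb : ∀ y, -1 ≤ cstar y) (hcub : ∀ y, cstar y ≤ β)
    (hconstr : ∫ y, cstar y * (μ y - η y) = 1 / α)
    (I : ℝ)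
    (hI : I = ∫ y in {y | η y < μ y},
        (if η y + μ y / β = 0 then 0 else (μ y - η y) ^ 2 / (η y + μ y / β)))
    (hIpos : 0 < I)
    (v : ℝ → ℝ)
    (hv : ∀ ε ∈ Ioo (0:ℝ) 1, 0 < v ε ∧
        ∫ y, max (v ε * cstar y) (-1 + ε) * (μ y - η y) = 1 / α) :
    (∀ ε ∈ Ioo (0:ℝ) 1, 1 ≤ v ε ∧ v ε ≤ 1 + 2 * ε / I) ∧
    Tendsto v (𝓝[>] 0) (𝓝 1) :=
  stmt18_general η μ hηm hμm hη0 hμ0 hη1 hμ1 α β hβ hpos cstar hcs hclb hcub hconstr I hI hIpos v hv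
end

section
/- Fix α > 0, β > 0. Set c*(y) = (μ(y) − η(y))/(η(y) + μ(y)/β) (taken to be 0 where η + μ/β = 0) and suppose ∫ c*(y)(μ(y) − η(y)) dy = 1/α and ∫_{{μ>η}} (μ(y) − η(y))²/(η(y) + μ(y)/β) dy > 0. For each ε ∈ (0, 1), let v_ε be the unique positive number such that c_ε(y) = max{ v_ε c*(y), −1 + ε } satisfies ∫ c_ε(y)(μ(y) − η(y)) dy = 1/α. Then lim_{ε → 0⁺} ∫ c_ε(y)² η(y) dy = ∫ c*(y)² η(y) dy and lim_{ε → 0⁺} ∫ c_ε(y)² μ(y) dy = ∫ c*(y)² μ(y) dy. -/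
open MeasureTheory Filter Topology Set

/-! On `{μ > η}` one has `c* > 0`, so there `c_ε = v_ε c*`; on `{μ ≤ η}` one has `c* ≤ 0` and
the truncation raises `c*` by at most `ε`. Splitting the constraint
`∫ (c_ε - c*)(μ - η) = 0` along these two sets gives
`1 ≤ v_ε ≤ 1 + ε ∫ |μ - η| / ∫_{μ > η} c* (μ - η)`, so `v_ε → 1`. Hence `c_ε → c*` pointwise,
with a uniform bound, and dominated convergence gives both limits. -/

namespace TruncatedRescale

variable {Ω : Type*} {c d : Ω → ℝ} {v ε B : ℝ}

def truncRescale (c : Ω → ℝ) (v ε : ℝ) (y : Ω) : ℝ := max (v * c y) (-1 + ε)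

lemma truncRescale_of_pos (hv : 0 < v) (hε : ε ≤ 1) {y : Ω} (hc : 0 < c y) :
    truncRescale c v ε y = v * c y :=
  max_eq_left (by nlinarith)

lemma abs_truncRescale_le (hε : ε ∈ Icc (0 : ℝ) 1) (hcB : ∀ y, |c y| ≤ B) (y : Ω) :
    |truncRescale c v ε y| ≤ |v| * B + 1 := by
  refine abs_max_le_max_abs_abs.trans (max_le ?_ ?_)
  · rw [abs_mul]
    linarith [mul_le_mul_of_nonneg_left (hcB y) (abs_nonneg v)]
  · have : 0 ≤ |v| * B := mul_nonneg (abs_nonneg v) ((abs_nonneg _).trans (hcB y))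
    rw [abs_le]
    constructor <;> linarith [hε.1, hε.2]

lemma truncRescale_sub_mul_le_indicator (hv0 : 0 < v) (hv1 : v < 1) (hε : ε ≤ 1)
    (hc_pos : ∀ y, 0 < d y → 0 < c y) (hc_nonpos : ∀ y, d y ≤ 0 → c y ≤ 0) (y : Ω) :
    (truncRescale c v ε y - c y) * d y ≤
      {y | 0 < d y}.indicator (fun y => (v - 1) * (c y * d y)) y := by
  by_cases hd : 0 < d y
  · rw [indicator_of_mem (s := {y | 0 < d y}) hd, truncRescale_of_pos hv0 hε (hc_pos y hd)]
    exact le_of_eq (by ring)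
  · rw [indicator_of_notMem (s := {y | 0 < d y}) hd]
    have hc := hc_nonpos y (not_lt.1 hd)
    have : c y ≤ truncRescale c v ε y := le_max_of_le_left (by nlinarith)
    exact mul_nonpos_of_nonneg_of_nonpos (by linarith) (not_lt.1 hd)

lemma indicator_sub_le_truncRescale_sub_mul (hv1 : 1 ≤ v) (hε : ε ∈ Icc (0 : ℝ) 1)
    (hc_lb : ∀ y, -1 ≤ c y) (hc_pos : ∀ y, 0 < d y → 0 < c y)
    (hc_nonpos : ∀ y, d y ≤ 0 → c y ≤ 0) (y : Ω) :
    {y | 0 < d y}.indicator (fun y => (v - 1) * (c y * d y)) y - ε * |d y| ≤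
      (truncRescale c v ε y - c y) * d y := by
  by_cases hd : 0 < d y
  · rw [indicator_of_mem (s := {y | 0 < d y}) hd,
      truncRescale_of_pos (by linarith) hε.2 (hc_pos y hd)]
    nlinarith [abs_nonneg (d y), hε.1]
  · rw [indicator_of_notMem (s := {y | 0 < d y}) hd, abs_of_nonpos (not_lt.1 hd)]
    have hc := hc_nonpos y (not_lt.1 hd)
    have : truncRescale c v ε y - c y ≤ ε :=
      sub_le_iff_le_add.2 (max_le (by nlinarith [hε.1]) (by linarith [hc_lb y]))
    nlinarith [not_lt.1 hd]

variable [MeasurableSpace Ω] {ν : Measure Ω}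

lemma measurable_truncRescale (hc : Measurable c) : Measurable (truncRescale c v ε) :=
  (hc.const_mul v).max measurable_const

lemma integrable_mul_of_abs_le (hc : Measurable c) (hcB : ∀ y, |c y| ≤ B)
    (hd : Integrable d ν) : Integrable (fun y => c y * d y) ν :=
  hd.bdd_mul hc.aestronglyMeasurable (.of_forall hcB)

lemma integrable_truncRescale_mul (hc : Measurable c) (hε : ε ∈ Icc (0 : ℝ) 1)
    (hcB : ∀ y, |c y| ≤ B) (hd : Integrable d ν) :
    Integrable (fun y => truncRescale c v ε y * d y) ν :=
  integrable_mul_of_abs_le (measurable_truncRescale hc) (abs_truncRescale_le hε hcB) hd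

lemma integrable_truncRescale_sub_mul (hc : Measurable c) (hε : ε ∈ Icc (0 : ℝ) 1)
    (hcB : ∀ y, |c y| ≤ B) (hd : Integrable d ν) :
    Integrable (fun y => (truncRescale c v ε y - c y) * d y) ν := by
  simp_rw [sub_mul]
  exact (integrable_truncRescale_mul hc hε hcB hd).sub (integrable_mul_of_abs_le hc hcB hd)

lemma integral_truncRescale_sub_mul_eq_zero (hc : Measurable c) (hε : ε ∈ Icc (0 : ℝ) 1)
    (hcB : ∀ y, |c y| ≤ B) (hd : Integrable d ν)
    (hconstr : ∫ y, truncRescale c v ε y * d y ∂ν = ∫ y, c y * d y ∂ν) :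
    ∫ y, (truncRescale c v ε y - c y) * d y ∂ν = 0 := by
  simp_rw [sub_mul]
  rw [integral_sub (integrable_truncRescale_mul hc hε hcB hd)
    (integrable_mul_of_abs_le hc hcB hd), hconstr, sub_self]

lemma integrable_indicator_sub_one_mul (hc : Measurable c) (hcB : ∀ y, |c y| ≤ B)
    (hd_meas : Measurable d) (hd : Integrable d ν) :
    Integrable ({y | 0 < d y}.indicator fun y => (v - 1) * (c y * d y)) ν :=
  ((integrable_mul_of_abs_le hc hcB hd).const_mul _).indicator
    (measurableSet_lt measurable_const hd_meas)

noncomputable def positiveMass (ν : Measure Ω) (c d : Ω → ℝ) : ℝ :=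
  ∫ y in {y | 0 < d y}, c y * d y ∂ν

lemma integral_indicator_sub_one_mul (hd_meas : Measurable d) :
    ∫ y, {y | 0 < d y}.indicator (fun y => (v - 1) * (c y * d y)) y ∂ν =
      (v - 1) * positiveMass ν c d := by
  rw [integral_indicator (measurableSet_lt measurable_const hd_meas), integral_const_mul,
    positiveMass]

lemma one_le_of_integral_truncRescale_mul_eq (hc : Measurable c) (hcB : ∀ y, |c y| ≤ B)
    (hc_pos : ∀ y, 0 < d y → 0 < c y) (hc_nonpos : ∀ y, d y ≤ 0 → c y ≤ 0)
    (hd_meas : Measurable d) (hd : Integrable d ν) (hI : 0 < positiveMass ν c d)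
    (hv : 0 < v) (hε : ε ∈ Icc (0 : ℝ) 1)
    (hconstr : ∫ y, truncRescale c v ε y * d y ∂ν = ∫ y, c y * d y ∂ν) :
    1 ≤ v := by
  by_contra! hv1
  have : (0 : ℝ) ≤ (v - 1) * positiveMass ν c d := by
    rw [← integral_truncRescale_sub_mul_eq_zero hc hε hcB hd hconstr,
      ← integral_indicator_sub_one_mul hd_meas]
    exact integral_mono (integrable_truncRescale_sub_mul hc hε hcB hd)
      (integrable_indicator_sub_one_mul hc hcB hd_meas hd)
      (truncRescale_sub_mul_le_indicator hv hv1 hε.2 hc_pos hc_nonpos)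
  nlinarith

lemma sub_one_mul_positiveMass_le (hc : Measurable c) (hcB : ∀ y, |c y| ≤ B)
    (hc_lb : ∀ y, -1 ≤ c y) (hc_pos : ∀ y, 0 < d y → 0 < c y)
    (hc_nonpos : ∀ y, d y ≤ 0 → c y ≤ 0) (hd_meas : Measurable d) (hd : Integrable d ν)
    (hv1 : 1 ≤ v) (hε : ε ∈ Icc (0 : ℝ) 1)
    (hconstr : ∫ y, truncRescale c v ε y * d y ∂ν = ∫ y, c y * d y ∂ν) :
    (v - 1) * positiveMass ν c d ≤ ε * ∫ y, |d y| ∂ν := by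
  have hind := integrable_indicator_sub_one_mul (v := v) hc hcB hd_meas hd
  have := integral_mono (hind.sub (hd.abs.const_mul ε))
    (integrable_truncRescale_sub_mul hc hε hcB hd)
    (indicator_sub_le_truncRescale_sub_mul hv1 hε hc_lb hc_pos hc_nonpos)
  rw [integral_sub' hind (hd.abs.const_mul ε), integral_indicator_sub_one_mul hd_meas,
    integral_const_mul, integral_truncRescale_sub_mul_eq_zero hc hε hcB hd hconstr] at this
  linarith

lemma tendsto_scale_of_integral_truncRescale_mul_eq {v : ℝ → ℝ} (hc : Measurable c)
    (hcB : ∀ y, |c y| ≤ B) (hc_lb : ∀ y, -1 ≤ c y) (hc_pos : ∀ y, 0 < d y → 0 < c y)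
    (hc_nonpos : ∀ y, d y ≤ 0 → c y ≤ 0) (hd_meas : Measurable d) (hd : Integrable d ν)
    (hI : 0 < positiveMass ν c d)
    (hv : ∀ ε ∈ Ioo (0 : ℝ) 1,
      0 < v ε ∧ ∫ y, truncRescale c (v ε) ε y * d y ∂ν = ∫ y, c y * d y ∂ν) :
    Tendsto v (𝓝[>] 0) (𝓝 1) := by
  have h_one_le : ∀ ε ∈ Ioo (0 : ℝ) 1, 1 ≤ v ε := fun ε hε =>
    one_le_of_integral_truncRescale_mul_eq hc hcB hc_pos hc_nonpos hd_meas hd hI (hv ε hε).1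
      (Ioo_subset_Icc_self hε) (hv ε hε).2
  have h_le : ∀ ε ∈ Ioo (0 : ℝ) 1, v ε ≤ 1 + ε * (∫ y, |d y| ∂ν) / positiveMass ν c d := by
    intro ε hε
    have := sub_one_mul_positiveMass_le hc hcB hc_lb hc_pos hc_nonpos hd_meas hd
      (h_one_le ε hε) (Ioo_subset_Icc_self hε) (hv ε hε).2
    linarith [(le_div_iff₀ hI).2 this]
  have h_lim : Tendsto (fun ε => 1 + ε * (∫ y, |d y| ∂ν) / positiveMass ν c d)
      (𝓝[>] 0) (𝓝 1) := by
    have : Continuous fun ε : ℝ => 1 + ε * (∫ y, |d y| ∂ν) / positiveMass ν c d := by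
      fun_prop
    simpa using (this.tendsto 0).mono_left nhdsWithin_le_nhds
  have h_mem : Ioo (0 : ℝ) 1 ∈ 𝓝[>] 0 := Ioo_mem_nhdsGT one_pos
  exact tendsto_of_tendsto_of_tendsto_of_le_of_le' tendsto_const_nhds h_lim
    (eventually_of_mem h_mem h_one_le) (eventually_of_mem h_mem h_le)

lemma tendsto_integral_truncRescale_sq_mul {v : ℝ → ℝ} (hv : Tendsto v (𝓝[>] 0) (𝓝 1))
    (hc : Measurable c) (hcB : ∀ y, |c y| ≤ B) (hc_lb : ∀ y, -1 ≤ c y) {ρ : Ω → ℝ}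
    (hρ : Integrable ρ ν) :
    Tendsto (fun ε => ∫ y, truncRescale c (v ε) ε y ^ 2 * ρ y ∂ν) (𝓝[>] 0)
      (𝓝 (∫ y, c y ^ 2 * ρ y ∂ν)) := by
  refine tendsto_integral_filter_of_dominated_convergence (fun y => (2 * B + 1) ^ 2 * |ρ y|)
    (.of_forall fun ε =>
      ((measurable_truncRescale hc).pow_const 2).aestronglyMeasurable.mul hρ.1)
    ?_ (hρ.abs.const_mul _) (.of_forall fun y => ?_)
  · filter_upwards [Ioo_mem_nhdsGT one_pos, hv.eventually (lt_mem_nhds zero_lt_one),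
      hv.eventually (gt_mem_nhds one_lt_two)] with ε hε hv0 hv2
    refine .of_forall fun y => ?_
    have hB : 0 ≤ B := (abs_nonneg _).trans (hcB y)
    have h_abs : |truncRescale c (v ε) ε y| ≤ 2 * B + 1 :=
      (abs_truncRescale_le (Ioo_subset_Icc_self hε) hcB y).trans
        (by rw [abs_of_pos hv0]; nlinarith)
    rw [norm_mul, norm_pow, Real.norm_eq_abs, Real.norm_eq_abs]
    gcongr
  · have h_lim : Tendsto (fun ε => truncRescale c (v ε) ε y) (𝓝[>] 0) (𝓝 (c y)) := by
      have h_floor : Tendsto (fun ε : ℝ => -1 + ε) (𝓝[>] 0) (𝓝 (-1)) := by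
        simpa using (tendsto_const_nhds (x := (-1 : ℝ))).add
          (tendsto_nhdsWithin_of_tendsto_nhds (tendsto_id (x := 𝓝 (0 : ℝ))))
      simpa [truncRescale, max_eq_left (hc_lb y)] using (hv.mul_const (c y)).max h_floor
    exact (h_lim.pow 2).mul_const _

end TruncatedRescale

open TruncatedRescale

noncomputable def cStar (β a b : ℝ) : ℝ := if a + b / β = 0 then 0 else (b - a) / (a + b / β)

lemma cStar_pos {β a b : ℝ} (hβ : 0 < β) (ha : 0 ≤ a) (hab : a < b) : 0 < cStar β a b := by
  have hden : 0 < a + b / β := by have := div_pos (ha.trans_lt hab) hβ; linarith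
  rw [cStar, if_neg hden.ne']
  exact div_pos (sub_pos.2 hab) hden

lemma cStar_nonpos {β a b : ℝ} (hβ : 0 < β) (ha : 0 ≤ a) (hb : 0 ≤ b) (hba : b ≤ a) :
    cStar β a b ≤ 0 := by
  unfold cStar
  split_ifs
  · rfl
  · exact div_nonpos_of_nonpos_of_nonneg (by linarith) (by positivity)

lemma cStar_mul_sub (β a b : ℝ) :
    cStar β a b * (b - a) = if a + b / β = 0 then 0 else (b - a) ^ 2 / (a + b / β) := by
  unfold cStar
  split_ifs
  · rw [zero_mul]
  · ring

theorem stmt19_general (η μ : ℝ → ℝ) (hηm : Measurable η) (hμm : Measurable μ)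
    (hη0 : ∀ y, 0 ≤ η y) (hμ0 : ∀ y, 0 ≤ μ y)
    (hη1 : ∫ y, η y = 1) (hμ1 : ∫ y, μ y = 1)
    (α β : ℝ) (hβ : 0 < β)
    (cstar : ℝ → ℝ)
    (hcs : cstar = fun y =>
        if η y + μ y / β = 0 then 0 else (μ y - η y) / (η y + μ y / β))
    (hclb : ∀ y, -1 ≤ cstar y) (hcub : ∀ y, cstar y ≤ β)
    (hconstr : ∫ y, cstar y * (μ y - η y) = 1 / α)
    (hIpos : 0 < ∫ y in {y | η y < μ y},
        (if η y + μ y / β = 0 then 0 else (μ y - η y) ^ 2 / (η y + μ y / β)))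
    (v : ℝ → ℝ)
    (hv : ∀ ε ∈ Ioo (0:ℝ) 1, 0 < v ε ∧
        ∫ y, max (v ε * cstar y) (-1 + ε) * (μ y - η y) = 1 / α) :
    Tendsto (fun ε => ∫ y, (max (v ε * cstar y) (-1 + ε)) ^ 2 * η y)
        (𝓝[>] 0) (𝓝 (∫ y, cstar y ^ 2 * η y)) ∧
    Tendsto (fun ε => ∫ y, (max (v ε * cstar y) (-1 + ε)) ^ 2 * μ y)
        (𝓝[>] 0) (𝓝 (∫ y, cstar y ^ 2 * μ y)) := by
  have hcs' : ∀ y, cstar y = cStar β (η y) (μ y) := fun y => by rw [hcs]; rfl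
  have hηi : Integrable η := .of_integral_ne_zero (by simp [hη1])
  have hμi : Integrable μ := .of_integral_ne_zero (by simp [hμ1])
  have hcm : Measurable cstar := by
    rw [hcs]
    exact Measurable.ite (measurableSet_eq_fun (by fun_prop) measurable_const)
      measurable_const (by fun_prop)
  have hcB : ∀ y, |cstar y| ≤ 1 + β := fun y =>
    abs_le.2 ⟨by linarith [hclb y], by linarith [hcub y]⟩
  have hc_pos : ∀ y, 0 < μ y - η y → 0 < cstar y := fun y h => by
    rw [hcs']; exact cStar_pos hβ (hη0 y) (sub_pos.1 h)
  have hc_nonpos : ∀ y, μ y - η y ≤ 0 → cstar y ≤ 0 := fun y h => by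
    rw [hcs']; exact cStar_nonpos hβ (hη0 y) (hμ0 y) (sub_nonpos.1 h)
  have hI : 0 < positiveMass volume cstar fun y => μ y - η y := by
    simpa only [positiveMass, sub_pos, hcs', cStar_mul_sub] using hIpos
  have hv_lim := tendsto_scale_of_integral_truncRescale_mul_eq hcm hcB hclb hc_pos hc_nonpos
    (hμm.sub hηm) (hμi.sub hηi) hI fun ε hε => ⟨(hv ε hε).1, (hv ε hε).2.trans hconstr.symm⟩
  exact ⟨tendsto_integral_truncRescale_sq_mul hv_lim hcm hcB hclb hηi,
    tendsto_integral_truncRescale_sq_mul hv_lim hcm hcB hclb hμi⟩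

/-- With `c*(y) = (μ(y) − η(y))/(η(y) + μ(y)/β)` (taken `0` where
`η + μ/β = 0`), `∫ c* (μ − η) = 1/α`, and `∫_{{μ>η}} (μ − η)²/(η + μ/β) > 0`:
if for each `ε ∈ (0,1)` the number `v ε` is the (unique) positive number such
that `c_ε = max{v ε ⬝ c*, −1 + ε}` satisfies `∫ c_ε (μ − η) = 1/α`, then
`∫ c_ε² η → ∫ c*² η` and `∫ c_ε² μ → ∫ c*² μ` as `ε → 0⁺`. -/
theorem stmt19 (η μ : ℝ → ℝ) (hηm : Measurable η) (hμm : Measurable μ)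
    (hη0 : ∀ y, 0 ≤ η y) (hμ0 : ∀ y, 0 ≤ μ y)
    (hη1 : ∫ y, η y = 1) (hμ1 : ∫ y, μ y = 1)
    (α β : ℝ) (hα : 0 < α) (hβ : 0 < β)
    (hpos : 0 < volume {y | η y < μ y})
    (cstar : ℝ → ℝ)
    (hcs : cstar = fun y =>
        if η y + μ y / β = 0 then 0 else (μ y - η y) / (η y + μ y / β))
    (hclb : ∀ y, -1 ≤ cstar y) (hcub : ∀ y, cstar y ≤ β)
    (hconstr : ∫ y, cstar y * (μ y - η y) = 1 / α)
    (hIpos : 0 < ∫ y in {y | η y < μ y},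
        (if η y + μ y / β = 0 then 0 else (μ y - η y) ^ 2 / (η y + μ y / β)))
    (v : ℝ → ℝ)
    (hv : ∀ ε ∈ Ioo (0:ℝ) 1, 0 < v ε ∧
        ∫ y, max (v ε * cstar y) (-1 + ε) * (μ y - η y) = 1 / α) :
    Tendsto (fun ε => ∫ y, (max (v ε * cstar y) (-1 + ε)) ^ 2 * η y)
        (𝓝[>] 0) (𝓝 (∫ y, cstar y ^ 2 * η y)) ∧
    Tendsto (fun ε => ∫ y, (max (v ε * cstar y) (-1 + ε)) ^ 2 * μ y)
        (𝓝[>] 0) (𝓝 (∫ y, cstar y ^ 2 * μ y)) :=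
  stmt19_general η μ hηm hμm hη0 hμ0 hη1 hμ1 α β hβ cstar hcs hclb hcub hconstr hIpos v hv
end
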